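/- arXiv:1112.3427 — 3 statements merged into one kernel-verified Lean document; each statement's English description precedes it below -/
import Mathlib

section
/- For every fixed p with 0 < p < 1, the centered lower heavily trimmed mean admits an i.i.d. representation: √n ( (1/⌈np⌉) ∑_{i=1}^{⌈np⌉} W_{(i)} − μ_l(p) ) − √n ξ̄_n →^P 0 as n → ∞, where ξ̄_n = (1/n)∑_{i=1}^n ξ_i and ξ_i = (1/p)[ W_i 𝟙{W_i ≤ F^{-1}(p)} − F^{-1}(p) 𝟙{W_i ≤ F^{-1}(p)} − (p μ_l(p) − p F^{-1}(p)) ] are i.i.d. random variables. -/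
open MeasureTheory ProbabilityTheory Filter Set
open Topology

/-- The `i`-th order statistic (1-indexed) of the sample `W 0, …, W (n-1)`. -/
noncomputable def orderStat {Ω : Type*} (W : ℕ → Ω → ℝ) (n i : ℕ) (ω : Ω) : ℝ :=
  (List.insertionSort (· ≤ ·) (List.ofFn fun j : Fin n => W j ω)).getD (i - 1) 0

/-- `ξ_i = (1/p)[Wᵢ𝟙{Wᵢ ≤ F⁻¹(p)} − F⁻¹(p)𝟙{Wᵢ ≤ F⁻¹(p)} − (p μ_l(p) − p F⁻¹(p))]`,
with `μ_l(p) = (1/p)∫_0^p F⁻¹(q) dq` and `Q = F⁻¹`. -/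
noncomputable def xiFn {Ω : Type*} (W : ℕ → Ω → ℝ) (Q : ℝ → ℝ) (p : ℝ) (i : ℕ) (ω : Ω) : ℝ :=
  (1 / p) * (W i ω * (if W i ω ≤ Q p then 1 else 0)
    - Q p * (if W i ω ≤ Q p then 1 else 0)
    - (p * ((1 / p) * ∫ q in (0 : ℝ)..p, Q q) - p * Q p))

set_option linter.unusedSectionVars false
set_option maxHeartbeats 1000000

section TrimAuxSec
open MeasureTheory ProbabilityTheory Filter Set Finset

namespace TrimAux


lemma filter_eq_range_card {n : ℕ} (pred : ℕ → Prop) [DecidablePred pred]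
    (hdc : ∀ i j, i ≤ j → j < n → pred j → pred i) :
    (Finset.range n).filter pred = Finset.range (((Finset.range n).filter pred).card) := by
  ext i
  simp only [Finset.mem_filter, Finset.mem_range]
  constructor
  · rintro ⟨hin, hpi⟩
    have hsub : Finset.range (i + 1) ⊆ (Finset.range n).filter pred := by
      intro j hj
      rw [Finset.mem_range] at hj
      have hji : j ≤ i := Nat.lt_succ_iff.mp hj
      exact Finset.mem_filter.mpr ⟨Finset.mem_range.mpr (lt_of_le_of_lt hji hin),
        hdc j i hji hin hpi⟩
    have := Finset.card_le_card hsub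
    simpa using this
  · intro hi
    by_contra hcon
    push_neg at hcon
    have hsub : (Finset.range n).filter pred ⊆ Finset.range i := by
      intro j hj
      rw [Finset.mem_filter, Finset.mem_range] at hj
      rw [Finset.mem_range]
      by_contra hij
      push_neg at hij
      exact absurd (hcon (lt_of_le_of_lt hij hj.1)) (by simp [hdc i j hij hj.1 hj.2])
    have := Finset.card_le_card hsub
    simp at this
    omega

variable {L : List ℝ}

lemma sorted_getD_mono (hL : L.Pairwise (· ≤ ·)) {i j : ℕ} (hij : i ≤ j) (hj : j < L.length) :
    L.getD i 0 ≤ L.getD j 0 := by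
  have hi : i < L.length := lt_of_le_of_lt hij hj
  rw [List.getD_eq_getElem (hn := hi), List.getD_eq_getElem (hn := hj)]
  exact hL.rel_get_of_le (a := ⟨i, hi⟩) (b := ⟨j, hj⟩) (by exact_mod_cast hij)

lemma sorted_le_iff_lt_card (hL : L.Pairwise (· ≤ ·)) (x : ℝ) {i : ℕ} (hi : i < L.length) :
    L.getD i 0 ≤ x ↔
      i < (((Finset.range L.length).filter (fun j => L.getD j 0 ≤ x)).card) := by
  have hdc : ∀ a b, a ≤ b → b < L.length → (L.getD b 0 ≤ x) → (L.getD a 0 ≤ x) :=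
    fun a b hab hb h => le_trans (sorted_getD_mono hL hab hb) h
  have h := filter_eq_range_card (fun j => L.getD j 0 ≤ x) hdc
  constructor
  · intro hle
    have : i ∈ (Finset.range L.length).filter (fun j => L.getD j 0 ≤ x) :=
      Finset.mem_filter.mpr ⟨Finset.mem_range.mpr hi, hle⟩
    rw [h] at this
    exact Finset.mem_range.mp this
  · intro hlt
    have : i ∈ (Finset.range L.length).filter (fun j => L.getD j 0 ≤ x) := by
      rw [h]; exact Finset.mem_range.mpr hlt
    exact (Finset.mem_filter.mp this).2

lemma prefix_sum_eq (hL : L.Pairwise (· ≤ ·)) (t : ℝ) :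
    ∑ j ∈ Finset.range (((Finset.range L.length).filter
        (fun j => L.getD j 0 ≤ t)).card), (L.getD j 0 - t)
      = ∑ j ∈ Finset.range L.length, ((L.getD j 0 - t) * (if L.getD j 0 ≤ t then 1 else 0)) := by
  have hdc : ∀ a b, a ≤ b → b < L.length → (L.getD b 0 ≤ t) → (L.getD a 0 ≤ t) :=
    fun a b hab hb h => le_trans (sorted_getD_mono hL hab hb) h
  have h := filter_eq_range_card (fun j => L.getD j 0 ≤ t) hdc
  rw [← h]
  rw [Finset.sum_filter]
  congr 1
  ext j
  by_cases hj : L.getD j 0 ≤ t <;> simp [hj]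

lemma card_filter_le (x : ℝ) :
    ((Finset.range L.length).filter (fun j => L.getD j 0 ≤ x)).card ≤ L.length := by
  exact le_trans (Finset.card_filter_le _ _) (by simp)

lemma diff_bound (hL : L.Pairwise (· ≤ ·)) (t : ℝ) {N : ℕ} (hN1 : 1 ≤ N) (hNn : N ≤ L.length) :
    |∑ j ∈ Finset.range N, (L.getD j 0 - t)
        - ∑ j ∈ Finset.range (((Finset.range L.length).filter
            (fun j => L.getD j 0 ≤ t)).card), (L.getD j 0 - t)|
      ≤ |(N : ℝ) - (((Finset.range L.length).filter (fun j => L.getD j 0 ≤ t)).card : ℝ)|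
        * |L.getD (N - 1) 0 - t| := by
  set K := ((Finset.range L.length).filter (fun j => L.getD j 0 ≤ t)).card with hK
  have hKn : K ≤ L.length := card_filter_le t
  have hN1' : N - 1 < L.length := by omega
  rcases le_total K N with hKN | hNK
  · -- K ≤ N : extra terms in Ico K N, each in (t, L.getD (N-1) 0]
    have hsub : ∑ j ∈ Finset.range N, (L.getD j 0 - t)
        - ∑ j ∈ Finset.range K, (L.getD j 0 - t)
        = ∑ j ∈ Finset.Ico K N, (L.getD j 0 - t) := by
      rw [Finset.sum_Ico_eq_sub _ hKN]
    rw [hsub]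
    calc |∑ j ∈ Finset.Ico K N, (L.getD j 0 - t)|
        ≤ ∑ j ∈ Finset.Ico K N, |L.getD j 0 - t| := Finset.abs_sum_le_sum_abs _ _
      _ ≤ ∑ _j ∈ Finset.Ico K N, |L.getD (N - 1) 0 - t| := by
          apply Finset.sum_le_sum
          intro j hj
          rw [Finset.mem_Ico] at hj
          have hjn : j < L.length := lt_of_lt_of_le hj.2 hNn
          have hgt : ¬ (L.getD j 0 ≤ t) := by
            intro hle
            have := (sorted_le_iff_lt_card hL t hjn).mp hle
            omega
          push_neg at hgt
          have hle : L.getD j 0 ≤ L.getD (N - 1) 0 :=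
            sorted_getD_mono hL (by omega) hN1'
          rw [abs_of_pos (by linarith), abs_of_pos (by linarith)]
          linarith
      _ = ((N - K : ℕ) : ℝ) * |L.getD (N - 1) 0 - t| := by
          rw [Finset.sum_const, Nat.card_Ico, nsmul_eq_mul]
      _ = |(N : ℝ) - (K : ℝ)| * |L.getD (N - 1) 0 - t| := by
          rw [Nat.cast_sub hKN, abs_of_nonneg (sub_nonneg.mpr (Nat.cast_le.mpr hKN))]
  · -- N ≤ K : missing terms in Ico N K, each in [L.getD (N-1) 0, t]
    have hsub : ∑ j ∈ Finset.range N, (L.getD j 0 - t)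
        - ∑ j ∈ Finset.range K, (L.getD j 0 - t)
        = -∑ j ∈ Finset.Ico N K, (L.getD j 0 - t) := by
      rw [Finset.sum_Ico_eq_sub _ hNK]; ring
    rw [hsub, abs_neg]
    calc |∑ j ∈ Finset.Ico N K, (L.getD j 0 - t)|
        ≤ ∑ j ∈ Finset.Ico N K, |L.getD j 0 - t| := Finset.abs_sum_le_sum_abs _ _
      _ ≤ ∑ _j ∈ Finset.Ico N K, |L.getD (N - 1) 0 - t| := by
          apply Finset.sum_le_sum
          intro j hj
          rw [Finset.mem_Ico] at hj
          have hjn : j < L.length := lt_of_lt_of_le hj.2 hKn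
          have hle : L.getD j 0 ≤ t := (sorted_le_iff_lt_card hL t hjn).mpr (by omega)
          have hge : L.getD (N - 1) 0 ≤ L.getD j 0 :=
            sorted_getD_mono hL (by omega) hjn
          rw [abs_of_nonpos (by linarith), abs_of_nonpos (by linarith)]
          linarith
      _ = ((K - N : ℕ) : ℝ) * |L.getD (N - 1) 0 - t| := by
          rw [Finset.sum_const, Nat.card_Ico, nsmul_eq_mul]
      _ = |(N : ℝ) - (K : ℝ)| * |L.getD (N - 1) 0 - t| := by
          rw [Nat.cast_sub hNK, abs_sub_comm (N:ℝ) (K:ℝ),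
            abs_of_nonneg (sub_nonneg.mpr (Nat.cast_le.mpr hNK))]



lemma list_sum_eq (M : List ℝ) (h : ℝ → ℝ) :
    ∑ j ∈ Finset.range M.length, h (M.getD j 0) = (M.map h).sum := by
  induction M with
  | nil => simp
  | cons a tl ih =>
    rw [List.length_cons, Finset.sum_range_succ']
    simp only [List.getD_cons_succ, List.getD_cons_zero, List.map_cons, List.sum_cons]
    rw [ih]; ring

lemma length_sortedList (v : ℕ → ℝ) (n : ℕ) :
    (List.insertionSort (· ≤ ·) (List.ofFn fun j : Fin n => v j)).length = n := by
  rw [(List.perm_insertionSort _ _).length_eq, List.length_ofFn]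

lemma sum_fun_sortedList (v : ℕ → ℝ) (n : ℕ) (h : ℝ → ℝ) :
    ∑ j ∈ Finset.range n,
        h ((List.insertionSort (· ≤ ·) (List.ofFn fun j : Fin n => v j)).getD j 0)
      = ∑ j ∈ Finset.range n, h (v j) := by
  set L := List.insertionSort (· ≤ ·) (List.ofFn fun j : Fin n => v j) with hLdef
  have hlen : L.length = n := length_sortedList v n
  have h1 : ∑ j ∈ Finset.range n, h (L.getD j 0) = (L.map h).sum := by
    rw [← hlen]; exact list_sum_eq L h
  have h2 : (L.map h).sum = ((List.ofFn fun j : Fin n => v j).map h).sum :=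
    ((List.perm_insertionSort _ _).map h).sum_eq
  rw [h1, h2]
  have h3 : (List.map h (List.ofFn fun j : Fin n => v j)) = List.ofFn fun j : Fin n => h (v j) := by
    rw [List.map_ofFn]; rfl
  rw [h3]
  have h4 : (List.ofFn fun j : Fin n => h (v j)).sum = ∑ i : Fin n, h (v i) :=
    Fin.sum_ofFn _
  exact h4.trans (Fin.sum_univ_eq_sum_range (fun j => h (v j)) n)



open Finset TrimAux

lemma cnt_cast (v : ℕ → ℝ) (n : ℕ) (t : ℝ) :
    ((((Finset.range n).filter (fun j =>
        (List.insertionSort (· ≤ ·) (List.ofFn fun j : Fin n => v j)).getD j 0 ≤ t)).card : ℝ))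
      = ∑ j ∈ Finset.range n, (if v j ≤ t then (1:ℝ) else 0) := by
  rw [← Finset.sum_boole]
  exact sum_fun_sortedList v n (fun y => if y ≤ t then (1:ℝ) else 0)

lemma det_le_iff (v : ℕ → ℝ) (n : ℕ) (t : ℝ) {N : ℕ} (hN1 : 1 ≤ N) (hNn : N ≤ n) :
    ((List.insertionSort (· ≤ ·) (List.ofFn fun j : Fin n => v j)).getD (N - 1) 0 ≤ t
      ↔ (N : ℝ) ≤ ∑ j ∈ Finset.range n, (if v j ≤ t then (1:ℝ) else 0)) := by
  set L := List.insertionSort (· ≤ ·) (List.ofFn fun j : Fin n => v j) with hLdef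
  have hlen : L.length = n := length_sortedList v n
  have hsort : L.Pairwise (· ≤ ·) := List.pairwise_insertionSort _ _
  have hi : N - 1 < L.length := by omega
  rw [sorted_le_iff_lt_card hsort t hi]
  have hcast : ((((Finset.range n).filter (fun j => L.getD j 0 ≤ t)).card : ℝ))
      = ∑ j ∈ Finset.range n, (if v j ≤ t then (1:ℝ) else 0) := cnt_cast v n t
  rw [hlen, ← hcast, Nat.cast_le]
  omega

lemma det_sum_bound (v : ℕ → ℝ) (n : ℕ) (t : ℝ) {N : ℕ} (hN1 : 1 ≤ N) (hNn : N ≤ n) :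
    |(∑ i ∈ Finset.Icc 1 N,
        ((List.insertionSort (· ≤ ·) (List.ofFn fun j : Fin n => v j)).getD (i - 1) 0 - t))
      - ∑ j ∈ Finset.range n, ((v j - t) * (if v j ≤ t then 1 else 0))|
    ≤ |(N : ℝ) - ∑ j ∈ Finset.range n, (if v j ≤ t then (1:ℝ) else 0)|
      * |(List.insertionSort (· ≤ ·) (List.ofFn fun j : Fin n => v j)).getD (N - 1) 0 - t| := by
  set L := List.insertionSort (· ≤ ·) (List.ofFn fun j : Fin n => v j) with hLdef
  have hlen : L.length = n := length_sortedList v n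
  have hsort : L.Pairwise (· ≤ ·) := List.pairwise_insertionSort _ _
  have hstep1 : ∑ i ∈ Finset.Icc 1 N, (L.getD (i - 1) 0 - t)
      = ∑ j ∈ Finset.range N, (L.getD j 0 - t) := by
    rw [← Finset.Ico_add_one_right_eq_Icc, Finset.sum_Ico_eq_sum_range]
    simp
  have hstep2 : ∑ j ∈ Finset.range n, ((v j - t) * (if v j ≤ t then 1 else 0))
      = ∑ j ∈ Finset.range (((Finset.range L.length).filter
          (fun j => L.getD j 0 ≤ t)).card), (L.getD j 0 - t) := by
    rw [prefix_sum_eq hsort t, hlen]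
    exact (sum_fun_sortedList v n (fun y => (y - t) * (if y ≤ t then 1 else 0))).symm
  have hcast : ((((Finset.range L.length).filter (fun j => L.getD j 0 ≤ t)).card : ℝ))
      = ∑ j ∈ Finset.range n, (if v j ≤ t then (1:ℝ) else 0) := by
    rw [hlen]; exact cnt_cast v n t
  rw [hstep1, hstep2, ← hcast]
  exact diff_bound hsort t hN1 (by omega)


lemma markov_meas {Ω : Type*} [MeasurableSpace Ω] (P : Measure Ω) [IsProbabilityMeasure P]
    {h : Ω → ℝ} (hm : Measurable h) (hint : Integrable h P) (hnn : ∀ ω, 0 ≤ h ω)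
    {a : ℝ} (ha : 0 < a) :
    P {ω | a ≤ h ω} ≤ ENNReal.ofReal ((∫ ω, h ω ∂P) / a) := by
  have key := mul_meas_ge_le_lintegral₀ (μ := P)
    (f := fun ω => ENNReal.ofReal (h ω)) (hm.ennreal_ofReal.aemeasurable) (ENNReal.ofReal a)
  have hset : {ω | ENNReal.ofReal a ≤ ENNReal.ofReal (h ω)} = {ω | a ≤ h ω} := by
    ext ω
    simp only [Set.mem_setOf_eq]
    rw [ENNReal.ofReal_le_ofReal_iff (hnn ω)]
  rw [hset] at key
  have hlint : ∫⁻ ω, ENNReal.ofReal (h ω) ∂P = ENNReal.ofReal (∫ ω, h ω ∂P) :=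
    (ofReal_integral_eq_lintegral_ofReal hint (Filter.Eventually.of_forall hnn)).symm
  rw [hlint] at key
  rw [ENNReal.ofReal_div_of_pos ha, ENNReal.le_div_iff_mul_le
    (Or.inl (by simp [ha])) (Or.inl ENNReal.ofReal_ne_top)]
  calc P {ω | a ≤ h ω} * ENNReal.ofReal a
      = ENNReal.ofReal a * P {ω | a ≤ h ω} := mul_comm _ _
    _ ≤ ENNReal.ofReal (∫ ω, h ω ∂P) := key

section Count
variable {Ω : Type*} [MeasurableSpace Ω] (P : Measure Ω) [IsProbabilityMeasure P]
  (W : ℕ → Ω → ℝ)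

lemma indicator_integral (hmeas : ∀ i, Measurable (W i)) (hident : ∀ i, IdentDistrib (W i) (W 0) P P) (x : ℝ) (j : ℕ) :
    ∫ ω, (if W j ω ≤ x then (1:ℝ) else 0) ∂P = (P (W 0 ⁻¹' Set.Iic x)).toReal := by
  have heq : (fun ω => if W j ω ≤ x then (1:ℝ) else 0)
      = Set.indicator (W j ⁻¹' Set.Iic x) (fun _ => (1:ℝ)) := by
    ext ω
    by_cases hw : W j ω ≤ x <;> simp [Set.indicator_apply, Set.mem_preimage, hw]
  rw [heq, integral_indicator_const _ ((hmeas j) measurableSet_Iic)]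
  have hmap : P (W j ⁻¹' Set.Iic x) = P (W 0 ⁻¹' Set.Iic x) := by
    have h1 : P (W j ⁻¹' Set.Iic x) = P.map (W j) (Set.Iic x) :=
      (Measure.map_apply (hmeas j) measurableSet_Iic).symm
    have h2 : P (W 0 ⁻¹' Set.Iic x) = P.map (W 0) (Set.Iic x) :=
      (Measure.map_apply (hmeas 0) measurableSet_Iic).symm
    rw [h1, h2, (hident j).map_eq]
  simp [measureReal_def, hmap]

lemma indicator_integrable (hmeas : ∀ i, Measurable (W i)) (x : ℝ) (j : ℕ) :
    Integrable (fun ω => if W j ω ≤ x then (1:ℝ) else 0) P := by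
  have heq : (fun ω => if W j ω ≤ x then (1:ℝ) else 0)
      = Set.indicator (W j ⁻¹' Set.Iic x) (fun _ => (1:ℝ)) := by
    ext ω
    by_cases hw : W j ω ≤ x <;> simp [Set.indicator_apply, Set.mem_preimage, hw]
  rw [heq]
  exact (integrable_const (1:ℝ)).indicator ((hmeas j) measurableSet_Iic)

lemma count_sq_moment (hmeas : ∀ i, Measurable (W i))
    (hindep : iIndepFun (m := fun _ => Real.measurableSpace) W P)
    (hident : ∀ i, IdentDistrib (W i) (W 0) P P) (x : ℝ) (n : ℕ) :
    ∫ ω, (∑ j ∈ Finset.range n, (if W j ω ≤ x then (1:ℝ) else 0)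
        - n * (P (W 0 ⁻¹' Set.Iic x)).toReal)^2 ∂P ≤ n := by
  set q : ℝ := (P (W 0 ⁻¹' Set.Iic x)).toReal with hq
  have hq0 : 0 ≤ q := ENNReal.toReal_nonneg
  have hq1 : q ≤ 1 := by
    rw [hq]
    exact ENNReal.toReal_le_of_le_ofReal zero_le_one (by simpa using prob_le_one)
  set φ : ℝ → ℝ := fun y => (if y ≤ x then (1:ℝ) else 0) - q with hφ
  have hφm : Measurable φ := by
    apply Measurable.sub _ measurable_const
    exact Measurable.ite measurableSet_Iic measurable_const measurable_const
  set γ : ℕ → Ω → ℝ := fun j ω => (if W j ω ≤ x then (1:ℝ) else 0) - q with hγ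
  have hγm : ∀ j, Measurable (γ j) := fun j => hφm.comp (hmeas j)
  have hγb : ∀ j ω, |γ j ω| ≤ 1 := by
    intro j ω
    by_cases hw : W j ω ≤ x <;> simp [hγ, hw, abs_le] <;> constructor <;> linarith
  have hγint : ∀ j, Integrable (γ j) P :=
    fun j => (indicator_integrable P W hmeas x j).sub (integrable_const q)
  have hγ0 : ∀ j, ∫ ω, γ j ω ∂P = 0 := by
    intro j
    rw [integral_sub (indicator_integrable P W hmeas x j) (integrable_const q),
      indicator_integral P W hmeas hident x j]
    simp [hq]
  have hprod_int : ∀ i j, Integrable (fun ω => γ i ω * γ j ω) P := by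
    intro i j
    apply Integrable.mono' (integrable_const (1:ℝ))
      ((hγm i).mul (hγm j)).aestronglyMeasurable
    apply Filter.Eventually.of_forall
    intro ω
    rw [Real.norm_eq_abs, Pi.mul_apply, abs_mul]
    calc |γ i ω| * |γ j ω| ≤ 1 * 1 :=
          mul_le_mul (hγb i ω) (hγb j ω) (abs_nonneg _) zero_le_one
      _ = 1 := one_mul 1
  have hcross : ∀ i j, i ≠ j → ∫ ω, γ i ω * γ j ω ∂P = 0 := by
    intro i j hij
    have hind : IndepFun (γ i) (γ j) P :=
      (hindep.indepFun hij).comp hφm hφm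
    have hmul := hind.integral_mul_eq_mul_integral (hγint i).1 (hγint j).1
    rw [hγ0 i, hγ0 j, mul_zero] at hmul
    simpa [Pi.mul_apply] using hmul
  have hdiag : ∀ i, ∫ ω, γ i ω * γ i ω ∂P ≤ 1 := by
    intro i
    calc ∫ ω, γ i ω * γ i ω ∂P ≤ ∫ _ω, (1:ℝ) ∂P := by
          apply integral_mono (hprod_int i i) (integrable_const 1)
          intro ω
          have h2 := abs_le.mp (hγb i ω)
          simp only []
          nlinarith [h2.1, h2.2]
      _ = 1 := by simp
  have hXeq : ∀ ω, (∑ j ∈ Finset.range n, (if W j ω ≤ x then (1:ℝ) else 0) - n * q)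
      = ∑ j ∈ Finset.range n, γ j ω := by
    intro ω
    rw [Finset.sum_sub_distrib]
    simp [mul_comm]
  calc ∫ ω, (∑ j ∈ Finset.range n, (if W j ω ≤ x then (1:ℝ) else 0) - n * q)^2 ∂P
      = ∫ ω, ∑ i ∈ Finset.range n, ∑ j ∈ Finset.range n, γ i ω * γ j ω ∂P := by
        congr 1
        ext ω
        rw [hXeq ω, sq, Finset.sum_mul_sum]
    _ = ∑ i ∈ Finset.range n, ∑ j ∈ Finset.range n, ∫ ω, γ i ω * γ j ω ∂P := by
        rw [integral_finset_sum]
        · congr 1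
          ext i
          rw [integral_finset_sum]
          intro j _
          exact hprod_int i j
        · intro i _
          exact integrable_finset_sum _ (fun j _ => hprod_int i j)
    _ = ∑ i ∈ Finset.range n, ∫ ω, γ i ω * γ i ω ∂P := by
        apply Finset.sum_congr rfl
        intro i hi
        exact Finset.sum_eq_single_of_mem i hi (fun j _ hji => hcross i j (Ne.symm hji))
    _ ≤ ∑ _i ∈ Finset.range n, (1:ℝ) := Finset.sum_le_sum (fun i _ => hdiag i)
    _ = n := by simp

end Count



section ProbPart
variable {Ω : Type*} [MeasurableSpace Ω] (P : Measure Ω) [IsProbabilityMeasure P]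
  (W : ℕ → Ω → ℝ)

lemma count_abs_moment (hmeas : ∀ i, Measurable (W i))
    (hindep : iIndepFun (m := fun _ => Real.measurableSpace) W P)
    (hident : ∀ i, IdentDistrib (W i) (W 0) P P) (x : ℝ) {n : ℕ} (hn : 1 ≤ n) :
    ∫ ω, |∑ j ∈ Finset.range n, (if W j ω ≤ x then (1:ℝ) else 0)
        - n * (P (W 0 ⁻¹' Set.Iic x)).toReal| ∂P ≤ Real.sqrt n := by
  set q : ℝ := (P (W 0 ⁻¹' Set.Iic x)).toReal with hq
  have hq0 : 0 ≤ q := ENNReal.toReal_nonneg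
  set X : Ω → ℝ := fun ω => ∑ j ∈ Finset.range n, (if W j ω ≤ x then (1:ℝ) else 0) - n * q
    with hX
  have hq1 : q ≤ 1 := by
    rw [hq]; exact ENNReal.toReal_le_of_le_ofReal zero_le_one (by simpa using prob_le_one)
  have hXm : Measurable X := by
    apply Measurable.sub _ measurable_const
    exact Finset.measurable_sum _ (fun j _ =>
      Measurable.ite ((hmeas j) measurableSet_Iic) measurable_const measurable_const)
  have hXb : ∀ ω, |X ω| ≤ 2 * n := by
    intro ω
    have h1 : |∑ j ∈ Finset.range n, (if W j ω ≤ x then (1:ℝ) else 0)| ≤ n := by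
      calc |∑ j ∈ Finset.range n, (if W j ω ≤ x then (1:ℝ) else 0)|
          ≤ ∑ j ∈ Finset.range n, |if W j ω ≤ x then (1:ℝ) else 0| :=
            Finset.abs_sum_le_sum_abs _ _
        _ ≤ ∑ _j ∈ Finset.range n, (1:ℝ) := by
            apply Finset.sum_le_sum; intro j _
            by_cases hw : W j ω ≤ x <;> simp [hw]
        _ = n := by simp
    have h2 : |(n:ℝ) * q| ≤ n := by
      rw [abs_mul, abs_of_nonneg (by positivity : (0:ℝ) ≤ (n:ℝ)), abs_of_nonneg hq0]
      nlinarith [Nat.cast_nonneg (α := ℝ) n]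
    calc |X ω| ≤ |∑ j ∈ Finset.range n, (if W j ω ≤ x then (1:ℝ) else 0)| + |(n:ℝ) * q| :=
          abs_sub _ _
      _ ≤ (n:ℝ) + n := add_le_add h1 h2
      _ = 2 * n := by ring
  have hXint : Integrable X P := by
    apply Integrable.mono' (integrable_const (2 * (n:ℝ))) hXm.aestronglyMeasurable
    exact Filter.Eventually.of_forall (fun ω => by rw [Real.norm_eq_abs]; exact hXb ω)
  have hXsqint : Integrable (fun ω => X ω ^ 2) P := by
    apply Integrable.mono' (integrable_const ((2 * (n:ℝ))^2))
      (hXm.pow_const 2).aestronglyMeasurable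
    apply Filter.Eventually.of_forall
    intro ω
    rw [Real.norm_eq_abs]
    nlinarith [hXb ω, abs_nonneg (X ω), sq_abs (X ω), abs_of_nonneg (sq_nonneg (X ω)),
      Nat.cast_nonneg (α := ℝ) n]
  have hn0 : (0:ℝ) < n := by exact_mod_cast hn
  set s : ℝ := Real.sqrt n with hs
  have hs0 : 0 < s := Real.sqrt_pos.mpr hn0
  have hpt : ∀ ω, |X ω| ≤ (s + X ω ^ 2 / s) / 2 := by
    intro ω
    have key : 2 * s * |X ω| ≤ s ^ 2 + X ω ^ 2 := by
      nlinarith [sq_nonneg (|X ω| - s), sq_abs (X ω)]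
    have h2s : (0:ℝ) < 2 * s := by linarith
    calc |X ω| = (2 * s * |X ω|) / (2 * s) := by field_simp
      _ ≤ (s ^ 2 + X ω ^ 2) / (2 * s) := by gcongr
      _ = (s + X ω ^ 2 / s) / 2 := by field_simp
  have hsq : ∫ ω, X ω ^ 2 ∂P ≤ (n:ℝ) := by
    simpa [hX] using count_sq_moment P W hmeas hindep hident x n
  have hint2 : Integrable (fun ω => (s + X ω ^ 2 / s) / 2) P :=
    ((integrable_const s).add (hXsqint.div_const s)).div_const 2
  have hsqnn : 0 ≤ ∫ ω, X ω ^ 2 ∂P := integral_nonneg (fun ω => sq_nonneg _)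
  calc ∫ ω, |X ω| ∂P ≤ ∫ ω, (s + X ω ^ 2 / s) / 2 ∂P :=
        integral_mono hXint.abs hint2 hpt
    _ = (s + (∫ ω, X ω ^ 2 ∂P) / s) / 2 := by
        rw [integral_div, integral_add (integrable_const s) (hXsqint.div_const s),
          integral_const, integral_div]
        simp
    _ ≤ (s + (n:ℝ) / s) / 2 := by gcongr
    _ = s := by
        rw [hs, Real.div_sqrt]; ring

lemma absA_bound (hmeas : ∀ i, Measurable (W i))
    (hident : ∀ i, IdentDistrib (W i) (W 0) P P)
    (hL2 : MemLp (W 0) 2 P) (t : ℝ) (n : ℕ) :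
    Integrable (fun ω => ∑ j ∈ Finset.range n, (W j ω - t) * (if W j ω ≤ t then 1 else 0)) P
    ∧ ∫ ω, |∑ j ∈ Finset.range n, (W j ω - t) * (if W j ω ≤ t then 1 else 0)| ∂P
      ≤ n * ∫ ω, |W 0 ω - t| ∂P := by
  have hWL2 : ∀ j, MemLp (W j) 2 P := fun j => ((hident j).memLp_iff).mpr hL2
  have hWint : ∀ j, Integrable (W j) P := fun j =>
    ((hWL2 j).integrable (by norm_num))
  have habsint : ∀ j, Integrable (fun ω => |W j ω - t|) P := fun j =>
    ((hWint j).sub (integrable_const t)).abs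
  have htermb : ∀ j ω, |(W j ω - t) * (if W j ω ≤ t then 1 else 0)| ≤ |W j ω - t| := by
    intro j ω
    rw [abs_mul]
    by_cases hw : W j ω ≤ t <;> simp [hw, abs_nonneg]
  have htermm : ∀ j, Measurable (fun ω => (W j ω - t) * (if W j ω ≤ t then (1:ℝ) else 0)) := by
    intro j
    exact ((hmeas j).sub measurable_const).mul
      (Measurable.ite ((hmeas j) measurableSet_Iic) measurable_const measurable_const)
  have htermint : ∀ j, Integrable (fun ω => (W j ω - t) * (if W j ω ≤ t then (1:ℝ) else 0)) P := by
    intro j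
    apply Integrable.mono' (habsint j) (htermm j).aestronglyMeasurable
    exact Filter.Eventually.of_forall (fun ω => by rw [Real.norm_eq_abs]; exact htermb j ω)
  have hAint : Integrable
      (fun ω => ∑ j ∈ Finset.range n, (W j ω - t) * (if W j ω ≤ t then 1 else 0)) P :=
    integrable_finset_sum _ (fun j _ => htermint j)
  refine ⟨hAint, ?_⟩
  have hident' : ∀ j, ∫ ω, |W j ω - t| ∂P = ∫ ω, |W 0 ω - t| ∂P := by
    intro j
    have hcomp : IdentDistrib (fun ω => |W j ω - t|) (fun ω => |W 0 ω - t|) P P :=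
      (hident j).comp (by measurability : Measurable (fun y : ℝ => |y - t|))
    exact hcomp.integral_eq
  calc ∫ ω, |∑ j ∈ Finset.range n, (W j ω - t) * (if W j ω ≤ t then 1 else 0)| ∂P
      ≤ ∫ ω, ∑ j ∈ Finset.range n, |W j ω - t| ∂P := by
        apply integral_mono hAint.abs (integrable_finset_sum _ (fun j _ => habsint j))
        intro ω
        calc |∑ j ∈ Finset.range n, (W j ω - t) * (if W j ω ≤ t then 1 else 0)|
            ≤ ∑ j ∈ Finset.range n, |(W j ω - t) * (if W j ω ≤ t then 1 else 0)| :=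
              Finset.abs_sum_le_sum_abs _ _
          _ ≤ ∑ j ∈ Finset.range n, |W j ω - t| :=
              Finset.sum_le_sum (fun j _ => htermb j ω)
    _ = ∑ j ∈ Finset.range n, ∫ ω, |W j ω - t| ∂P :=
        integral_finset_sum _ (fun j _ => habsint j)
    _ = n * ∫ ω, |W 0 ω - t| ∂P := by
        rw [Finset.sum_congr rfl (fun j _ => hident' j)]
        simp [mul_comm]
  -- done



end ProbPart
end TrimAux
end TrimAuxSec


/-- **I.i.d. representation of the centered lower trimmed mean.**
Under (A1)–(A2), for every fixed `p ∈ (0,1)`,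
`√n ((1/⌈np⌉)∑_{i=1}^{⌈np⌉} W_{(i)} − μ_l(p)) − √n ξ̄_n →ᴾ 0`,
where `ξ̄_n = (1/n)∑_{i=1}^n ξᵢ`. -/
theorem trimmed_lower_mean_iid_representation
    {Ω : Type*} [MeasurableSpace Ω] (P : Measure Ω) [IsProbabilityMeasure P]
    (W : ℕ → Ω → ℝ) (hmeas : ∀ i, Measurable (W i))
    (hindep : iIndepFun (m := fun _ => Real.measurableSpace) W P)
    (hident : ∀ i, IdentDistrib (W i) (W 0) P P)
    (F f Q : ℝ → ℝ)
    (hcdf : ∀ x, F x = (P (W 0 ⁻¹' Iic x)).toReal)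
    (hdensity : P.map (W 0) = volume.withDensity (fun x => ENNReal.ofReal (f x)))
    (hQ : ∀ p ∈ Ioo (0 : ℝ) 1, F (Q p) = p ∧ ∀ y, F y = p → y = Q p)
    (hL2 : MemLp (W 0) 2 P)
    (p : ℝ) (hp : p ∈ Ioo (0 : ℝ) 1) :
    TendstoInMeasure P
      (fun (n : ℕ) ω =>
        Real.sqrt n * ((1 / (⌈(n : ℝ) * p⌉₊ : ℝ)) *
            (∑ i ∈ Finset.Icc 1 ⌈(n : ℝ) * p⌉₊, orderStat W n i ω)
          - (1 / p) * ∫ q in (0 : ℝ)..p, Q q)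
        - Real.sqrt n * ((1 / (n : ℝ)) * ∑ i ∈ Finset.range n, xiFn W Q p i ω))
      atTop (fun _ => (0 : ℝ)) := by
  classical
  obtain ⟨hp0, hp1⟩ := hp
  rw [tendstoInMeasure_iff_dist]
  intro ε hε
  simp only [Real.dist_eq, sub_zero]
  rw [ENNReal.tendsto_nhds_zero]
  intro η hη
  set t₀ : ℝ := Q p with ht₀
  set μl : ℝ := (1 / p) * ∫ q in (0 : ℝ)..p, Q q with hμl
  have hFt₀ : F t₀ = p := (hQ p ⟨hp0, hp1⟩).1
  have hFuniq : ∀ y, F y = p → y = t₀ := (hQ p ⟨hp0, hp1⟩).2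
  have hFmono : Monotone F := by
    intro x y hxy
    rw [hcdf x, hcdf y]
    exact ENNReal.toReal_mono (measure_ne_top P _)
      (measure_mono (Set.preimage_mono (Set.Iic_subset_Iic.mpr hxy)))
  have hFgt : ∀ c : ℝ, 0 < c → p < F (t₀ + c) := by
    intro c hc
    have hle : p ≤ F (t₀ + c) := hFt₀ ▸ hFmono (by linarith)
    rcases lt_or_eq_of_le hle with h | h
    · exact h
    · exfalso; have := hFuniq (t₀ + c) h.symm; linarith
  have hFlt : ∀ c : ℝ, 0 < c → F (t₀ - c) < p := by
    intro c hc
    have hle : F (t₀ - c) ≤ p := hFt₀ ▸ hFmono (by linarith)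
    rcases lt_or_eq_of_le hle with h | h
    · exact h
    · exfalso; have := hFuniq (t₀ - c) h; linarith
  -- the key pointwise bound
  have hGb : ∀ n : ℕ, 1 ≤ n → ∀ ω : Ω,
      |Real.sqrt n * ((1 / (⌈(n : ℝ) * p⌉₊ : ℝ)) *
            (∑ i ∈ Finset.Icc 1 ⌈(n : ℝ) * p⌉₊, orderStat W n i ω) - μl)
        - Real.sqrt n * ((1 / (n : ℝ)) * ∑ i ∈ Finset.range n, xiFn W Q p i ω)|
      ≤ |∑ j ∈ Finset.range n, (W j ω - t₀) * (if W j ω ≤ t₀ then 1 else 0)|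
            * (Real.sqrt n / ((n : ℝ) ^ 2 * p ^ 2))
        + ((Real.sqrt n / ((n : ℝ) * p)) * |((⌈(n : ℝ) * p⌉₊ : ℕ) : ℝ)
              - ∑ j ∈ Finset.range n, (if W j ω ≤ t₀ then (1:ℝ) else 0)|)
          * |orderStat W n ⌈(n : ℝ) * p⌉₊ ω - t₀| := by
    intro n hn ω
    have hn0 : (0 : ℝ) < n := by exact_mod_cast hn
    have hnp : 0 < (n : ℝ) * p := by positivity
    set N : ℕ := ⌈(n : ℝ) * p⌉₊ with hN
    have hN1 : 1 ≤ N := Nat.one_le_iff_ne_zero.mpr (Nat.pos_iff_ne_zero.mp (Nat.ceil_pos.mpr hnp))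
    have hNn : N ≤ n := Nat.ceil_le.mpr (by nlinarith)
    have hNlb : (n : ℝ) * p ≤ N := Nat.le_ceil _
    have hNub : (N : ℝ) ≤ (n : ℝ) * p + 1 := (Nat.ceil_lt_add_one hnp.le).le
    have hN0 : (0 : ℝ) < N := lt_of_lt_of_le hnp hNlb
    set Af : ℝ := ∑ j ∈ Finset.range n, (W j ω - t₀) * (if W j ω ≤ t₀ then 1 else 0) with hAf
    set Kf : ℝ := ∑ j ∈ Finset.range n, (if W j ω ≤ t₀ then (1:ℝ) else 0) with hKf
    set S' : ℝ := ∑ i ∈ Finset.Icc 1 N, (orderStat W n i ω - t₀) with hS'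
    have hordsum : ∑ i ∈ Finset.Icc 1 N, orderStat W n i ω = S' + N * t₀ := by
      rw [hS', Finset.sum_sub_distrib, Finset.sum_const, Nat.card_Icc]
      simp
    have hxisum : ∑ i ∈ Finset.range n, xiFn W Q p i ω
        = (1 / p) * Af - n * μl + n * t₀ := by
      have hterm : ∀ i, xiFn W Q p i ω
          = (1 / p) * ((W i ω - t₀) * (if W i ω ≤ t₀ then 1 else 0)) - μl + t₀ := by
        intro i
        simp only [xiFn, ← ht₀, ← hμl]
        by_cases h : W i ω ≤ t₀ <;> field_simp [h] <;> ring
      have hrw : ∑ i ∈ Finset.range n, xiFn W Q p i ω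
          = ∑ i ∈ Finset.range n,
              ((1 / p) * ((W i ω - t₀) * (if W i ω ≤ t₀ then 1 else 0)) - μl + t₀) :=
        Finset.sum_congr rfl (fun i _ => hterm i)
      rw [hrw, Finset.sum_add_distrib, Finset.sum_sub_distrib, ← Finset.mul_sum, ← hAf,
        Finset.sum_const, Finset.sum_const, Finset.card_range, nsmul_eq_mul, nsmul_eq_mul]
    have hGeq : Real.sqrt n * ((1 / (N : ℝ)) *
            (∑ i ∈ Finset.Icc 1 N, orderStat W n i ω) - μl)
          - Real.sqrt n * ((1 / (n : ℝ)) * ∑ i ∈ Finset.range n, xiFn W Q p i ω)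
        = Real.sqrt n * ((S' - Af) / N)
          + Real.sqrt n * Af * (1 / (N : ℝ) - 1 / ((n : ℝ) * p)) := by
      rw [hordsum, hxisum]
      field_simp
      ring
    rw [hGeq]
    have hdet : |S' - Af| ≤ |(N : ℝ) - Kf| * |orderStat W n N ω - t₀| := by
      have h := TrimAux.det_sum_bound (fun j => W j ω) n t₀ hN1 hNn
      exact h
    have habs1 : |Real.sqrt n * ((S' - Af) / N)|
        ≤ ((Real.sqrt n / ((n : ℝ) * p)) * |(N : ℝ) - Kf|) * |orderStat W n N ω - t₀| := by
      rw [abs_mul, abs_of_nonneg (Real.sqrt_nonneg _), abs_div,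
        abs_of_nonneg hN0.le]
      have hdd : |S' - Af| / (N : ℝ)
          ≤ (|(N : ℝ) - Kf| * |orderStat W n N ω - t₀|) / ((n : ℝ) * p) :=
        div_le_div₀ (by positivity) hdet hnp hNlb
      calc Real.sqrt n * (|S' - Af| / (N : ℝ))
          ≤ Real.sqrt n * ((|(N : ℝ) - Kf| * |orderStat W n N ω - t₀|) / ((n : ℝ) * p)) :=
            mul_le_mul_of_nonneg_left hdd (Real.sqrt_nonneg _)
        _ = ((Real.sqrt n / ((n : ℝ) * p)) * |(N : ℝ) - Kf|) * |orderStat W n N ω - t₀| := by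
            ring
    have habs2 : |Real.sqrt n * Af * (1 / (N : ℝ) - 1 / ((n : ℝ) * p))|
        ≤ |Af| * (Real.sqrt n / ((n : ℝ) ^ 2 * p ^ 2)) := by
      have hfrac : |1 / (N : ℝ) - 1 / ((n : ℝ) * p)| ≤ 1 / ((n : ℝ) ^ 2 * p ^ 2) := by
        have h1 : 1 / (N : ℝ) ≤ 1 / ((n : ℝ) * p) := by
          apply one_div_le_one_div_of_le hnp hNlb
        have h2 : 1 / ((n : ℝ) * p) - 1 / (N : ℝ) ≤ 1 / ((n : ℝ) ^ 2 * p ^ 2) := by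
          rw [div_sub_div _ _ (ne_of_gt hnp) (ne_of_gt hN0)]
          apply div_le_div₀ (by positivity) (by linarith) (by positivity)
          calc (n : ℝ) ^ 2 * p ^ 2 = ((n : ℝ) * p) * ((n : ℝ) * p) := by ring
            _ ≤ ((n : ℝ) * p) * N := by nlinarith
        rw [abs_sub_comm, abs_of_nonneg (by linarith)]
        linarith
      rw [abs_mul, abs_mul, abs_of_nonneg (Real.sqrt_nonneg _)]
      calc Real.sqrt n * |Af| * |1 / (N : ℝ) - 1 / ((n : ℝ) * p)|
          ≤ Real.sqrt n * |Af| * (1 / ((n : ℝ) ^ 2 * p ^ 2)) := by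
            apply mul_le_mul_of_nonneg_left hfrac (by positivity)
        _ = |Af| * (Real.sqrt n / ((n : ℝ) ^ 2 * p ^ 2)) := by ring
    calc |Real.sqrt n * ((S' - Af) / N)
          + Real.sqrt n * Af * (1 / (N : ℝ) - 1 / ((n : ℝ) * p))|
        ≤ |Real.sqrt n * ((S' - Af) / N)|
          + |Real.sqrt n * Af * (1 / (N : ℝ) - 1 / ((n : ℝ) * p))| := abs_add_le _ _
      _ ≤ ((Real.sqrt n / ((n : ℝ) * p)) * |(N : ℝ) - Kf|) * |orderStat W n N ω - t₀|
          + |Af| * (Real.sqrt n / ((n : ℝ) ^ 2 * p ^ 2)) := add_le_add habs1 habs2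
      _ = |Af| * (Real.sqrt n / ((n : ℝ) ^ 2 * p ^ 2))
          + ((Real.sqrt n / ((n : ℝ) * p)) * |(N : ℝ) - Kf|) * |orderStat W n N ω - t₀| := by
          ring
    -- choose δ
  obtain ⟨δ, hδ0, hδη⟩ : ∃ δ : ℝ, 0 < δ ∧ ENNReal.ofReal (4 * δ) ≤ η := by
    rcases eq_or_ne η ⊤ with hT | hT
    · exact ⟨1, one_pos, by simp [hT]⟩
    · have h0 : 0 < η.toReal := ENNReal.toReal_pos (ne_of_gt hη) hT
      refine ⟨η.toReal / 8, by positivity, ?_⟩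
      have h48 : (4 : ℝ) * (η.toReal / 8) = η.toReal / 2 := by ring
      rw [h48]
      calc ENNReal.ofReal (η.toReal / 2) ≤ ENNReal.ofReal η.toReal :=
            ENNReal.ofReal_le_ofReal (by linarith)
        _ = η := ENNReal.ofReal_toReal hT
  set M : ℝ := (2 / p) / δ with hM
  have hM0 : 0 < M := by positivity
  set c : ℝ := ε / (4 * M) with hc
  have hc0 : 0 < c := by positivity
  set qp : ℝ := F (t₀ + c) with hqp
  set qm : ℝ := F (t₀ - c) with hqm
  have hqpgt : p < qp := hFgt c hc0
  have hqmlt : qm < p := hFlt c hc0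
  set C : ℝ := ∫ ω, |W 0 ω - t₀| ∂P with hC
  have hC0 : 0 ≤ C := by
    rw [hC]; exact integral_nonneg (fun ω => abs_nonneg _)
  have hF01 : ∀ x : ℝ, 0 ≤ F x ∧ F x ≤ 1 := by
    intro x
    rw [hcdf x]
    exact ⟨ENNReal.toReal_nonneg,
      ENNReal.toReal_le_of_le_ofReal zero_le_one (by simpa using prob_le_one)⟩
  -- helpers about the counting sums
  have hKmeas : ∀ (x : ℝ) (n : ℕ),
      Measurable (fun ω => ∑ j ∈ Finset.range n, (if W j ω ≤ x then (1:ℝ) else 0)) :=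
    fun x n => Finset.measurable_sum _ (fun j _ =>
      Measurable.ite ((hmeas j) measurableSet_Iic) measurable_const measurable_const)
  have hKbd : ∀ (x : ℝ) (n : ℕ) (ω : Ω),
      0 ≤ (∑ j ∈ Finset.range n, (if W j ω ≤ x then (1:ℝ) else 0))
      ∧ (∑ j ∈ Finset.range n, (if W j ω ≤ x then (1:ℝ) else 0)) ≤ n := by
    intro x n ω
    constructor
    · apply Finset.sum_nonneg
      intro j _
      by_cases h : W j ω ≤ x <;> simp [h]
    · calc (∑ j ∈ Finset.range n, (if W j ω ≤ x then (1:ℝ) else 0))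
          ≤ ∑ _j ∈ Finset.range n, (1:ℝ) :=
            Finset.sum_le_sum (fun j _ => by by_cases h : W j ω ≤ x <;> simp [h])
        _ = n := by simp
  have hKint : ∀ (x : ℝ) (n : ℕ),
      Integrable (fun ω => ∑ j ∈ Finset.range n, (if W j ω ≤ x then (1:ℝ) else 0)) P := by
    intro x n
    apply Integrable.mono' (integrable_const ((n:ℝ))) (hKmeas x n).aestronglyMeasurable
    apply Filter.Eventually.of_forall
    intro ω
    rw [Real.norm_eq_abs, abs_of_nonneg (hKbd x n ω).1]
    exact (hKbd x n ω).2
  -- generic Chebyshev bound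
  have hcheb : ∀ (x k : ℝ), 0 < k → ∀ n : ℕ, 1 ≤ n →
      P {ω | (n:ℝ) * k ≤ |∑ j ∈ Finset.range n, (if W j ω ≤ x then (1:ℝ) else 0) - n * F x|}
        ≤ ENNReal.ofReal ((1 / k^2) * (1/(n:ℝ))) := by
    intro x k hk n hn
    have hn0 : (0:ℝ) < n := by exact_mod_cast hn
    have hq0 : 0 ≤ F x := (hF01 x).1
    have hq1 : F x ≤ 1 := (hF01 x).2
    have hXm : Measurable (fun ω =>
        ∑ j ∈ Finset.range n, (if W j ω ≤ x then (1:ℝ) else 0) - n * F x) :=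
      (hKmeas x n).sub measurable_const
    have hXb : ∀ ω, |∑ j ∈ Finset.range n, (if W j ω ≤ x then (1:ℝ) else 0) - n * F x|
        ≤ 2 * n := by
      intro ω
      have h1 := (hKbd x n ω).1
      have h2 := (hKbd x n ω).2
      rw [abs_le]
      constructor <;> nlinarith
    have hsqint : Integrable (fun ω =>
        (∑ j ∈ Finset.range n, (if W j ω ≤ x then (1:ℝ) else 0) - n * F x)^2) P := by
      apply Integrable.mono' (integrable_const ((2*(n:ℝ))^2))
        (hXm.pow_const 2).aestronglyMeasurable
      apply Filter.Eventually.of_forall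
      intro ω
      rw [Real.norm_eq_abs]
      nlinarith [hXb ω, abs_nonneg (∑ j ∈ Finset.range n,
        (if W j ω ≤ x then (1:ℝ) else 0) - n * F x),
        sq_abs (∑ j ∈ Finset.range n, (if W j ω ≤ x then (1:ℝ) else 0) - n * F x),
        abs_of_nonneg (sq_nonneg (∑ j ∈ Finset.range n,
          (if W j ω ≤ x then (1:ℝ) else 0) - n * F x))]
    have hsub : {ω | (n:ℝ) * k ≤ |∑ j ∈ Finset.range n,
          (if W j ω ≤ x then (1:ℝ) else 0) - n * F x|}
        ⊆ {ω | ((n:ℝ) * k)^2 ≤ (∑ j ∈ Finset.range n,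
          (if W j ω ≤ x then (1:ℝ) else 0) - n * F x)^2} := by
      intro ω h
      simp only [Set.mem_setOf_eq] at h ⊢
      calc ((n:ℝ) * k)^2 ≤ |∑ j ∈ Finset.range n,
            (if W j ω ≤ x then (1:ℝ) else 0) - n * F x|^2 := by
            apply pow_le_pow_left₀ (by positivity) h
        _ = (∑ j ∈ Finset.range n, (if W j ω ≤ x then (1:ℝ) else 0) - n * F x)^2 :=
            sq_abs _
    have hsqmoment : ∫ ω, (∑ j ∈ Finset.range n,
        (if W j ω ≤ x then (1:ℝ) else 0) - n * F x)^2 ∂P ≤ n := by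
      have h := TrimAux.count_sq_moment P W hmeas hindep hident x n
      rw [← hcdf x] at h
      exact h
    calc P {ω | (n:ℝ) * k ≤ |∑ j ∈ Finset.range n,
          (if W j ω ≤ x then (1:ℝ) else 0) - n * F x|}
        ≤ P {ω | ((n:ℝ) * k)^2 ≤ (∑ j ∈ Finset.range n,
          (if W j ω ≤ x then (1:ℝ) else 0) - n * F x)^2} := measure_mono hsub
      _ ≤ ENNReal.ofReal ((∫ ω, (∑ j ∈ Finset.range n,
            (if W j ω ≤ x then (1:ℝ) else 0) - n * F x)^2 ∂P) / (((n:ℝ) * k)^2)) :=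
          TrimAux.markov_meas P (hXm.pow_const 2) hsqint (fun ω => sq_nonneg _) (by positivity)
      _ ≤ ENNReal.ofReal ((1 / k^2) * (1/(n:ℝ))) := by
          apply ENNReal.ofReal_le_ofReal
          calc (∫ ω, (∑ j ∈ Finset.range n,
                (if W j ω ≤ x then (1:ℝ) else 0) - n * F x)^2 ∂P) / (((n:ℝ) * k)^2)
              ≤ (n:ℝ) / (((n:ℝ) * k)^2) := by gcongr
            _ = (1 / k^2) * (1/(n:ℝ)) := by field_simp
  -- the four eventual bounds
  have hev3 : ∀ᶠ n : ℕ in atTop,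
      P {ω | (n:ℝ) * (qp - p) ≤ |∑ j ∈ Finset.range n,
          (if W j ω ≤ t₀ + c then (1:ℝ) else 0) - n * qp|} ≤ ENNReal.ofReal δ := by
    have hten : Tendsto (fun n : ℕ => (1/(qp - p)^2) * (1/(n:ℝ))) atTop (𝓝 0) := by
      have h := tendsto_one_div_atTop_nhds_zero_nat.const_mul (1/(qp - p)^2)
      rw [mul_zero] at h
      exact h
    filter_upwards [eventually_ge_atTop 1, hten.eventually_lt_const hδ0] with n hn hlt
    have h := hcheb (t₀ + c) (qp - p) (by linarith) n hn
    rw [← hqp] at h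
    exact le_trans h (ENNReal.ofReal_le_ofReal hlt.le)
  have hev4 : ∀ᶠ n : ℕ in atTop,
      P {ω | (n:ℝ) * (p - qm) ≤ |∑ j ∈ Finset.range n,
          (if W j ω ≤ t₀ - c then (1:ℝ) else 0) - n * qm|} ≤ ENNReal.ofReal δ := by
    have hten : Tendsto (fun n : ℕ => (1/(p - qm)^2) * (1/(n:ℝ))) atTop (𝓝 0) := by
      have h := tendsto_one_div_atTop_nhds_zero_nat.const_mul (1/(p - qm)^2)
      rw [mul_zero] at h
      exact h
    filter_upwards [eventually_ge_atTop 1, hten.eventually_lt_const hδ0] with n hn hlt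
    have h := hcheb (t₀ - c) (p - qm) (by linarith) n hn
    rw [← hqm] at h
    exact le_trans h (ENNReal.ofReal_le_ofReal hlt.le)
  have hsqrtT : Tendsto (fun n : ℕ => Real.sqrt n) atTop atTop := by
    apply Filter.tendsto_atTop_atTop.mpr
    intro b
    refine ⟨⌈b^2⌉₊, fun n hn => ?_⟩
    have h1 : (b:ℝ)^2 ≤ n := le_trans (Nat.le_ceil _) (by exact_mod_cast hn)
    calc b ≤ |b| := le_abs_self b
      _ = Real.sqrt (b^2) := (Real.sqrt_sq_eq_abs b).symm
      _ ≤ Real.sqrt n := Real.sqrt_le_sqrt h1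
  have hev1 : ∀ᶠ n : ℕ in atTop,
      P {ω | ε/2 ≤ |∑ j ∈ Finset.range n, (W j ω - t₀) * (if W j ω ≤ t₀ then 1 else 0)|
          * (Real.sqrt n / ((n:ℝ)^2 * p^2))} ≤ ENNReal.ofReal δ := by
    have hinv : Tendsto (fun n : ℕ => (Real.sqrt n)⁻¹) atTop (𝓝 0) :=
      hsqrtT.inv_tendsto_atTop
    have hten : Tendsto (fun n : ℕ => (C/(p^2*(ε/2))) * (Real.sqrt n)⁻¹) atTop (𝓝 0) := by
      simpa using hinv.const_mul (C/(p^2*(ε/2)))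
    filter_upwards [eventually_ge_atTop 1, hten.eventually_lt_const hδ0] with n hn hlt
    have hn0 : (0:ℝ) < n := by exact_mod_cast hn
    have hs0 : 0 < Real.sqrt n := Real.sqrt_pos.mpr hn0
    have hss : Real.sqrt n * Real.sqrt n = (n:ℝ) := Real.mul_self_sqrt hn0.le
    obtain ⟨hAint, hAbound⟩ := TrimAux.absA_bound P W hmeas hident hL2 t₀ n
    rw [← hC] at hAbound
    have hAm : Measurable (fun ω =>
        ∑ j ∈ Finset.range n, (W j ω - t₀) * (if W j ω ≤ t₀ then (1:ℝ) else 0)) :=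
      Finset.measurable_sum _ (fun j _ => ((hmeas j).sub measurable_const).mul
        (Measurable.ite ((hmeas j) measurableSet_Iic) measurable_const measurable_const))
    have hm : Measurable (fun ω =>
        |∑ j ∈ Finset.range n, (W j ω - t₀) * (if W j ω ≤ t₀ then (1:ℝ) else 0)|
          * (Real.sqrt n / ((n:ℝ)^2 * p^2))) := hAm.abs.mul_const _
    have hinth : Integrable (fun ω =>
        |∑ j ∈ Finset.range n, (W j ω - t₀) * (if W j ω ≤ t₀ then (1:ℝ) else 0)|
          * (Real.sqrt n / ((n:ℝ)^2 * p^2))) P := hAint.abs.mul_const _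
    have hnn : ∀ ω, 0 ≤ |∑ j ∈ Finset.range n,
        (W j ω - t₀) * (if W j ω ≤ t₀ then (1:ℝ) else 0)|
          * (Real.sqrt n / ((n:ℝ)^2 * p^2)) := fun ω => by positivity
    have hmark := TrimAux.markov_meas P hm hinth hnn (half_pos hε)
    refine le_trans hmark (le_trans (ENNReal.ofReal_le_ofReal ?_)
      (ENNReal.ofReal_le_ofReal hlt.le))
    rw [integral_mul_const]
    calc (∫ ω, |∑ j ∈ Finset.range n,
          (W j ω - t₀) * (if W j ω ≤ t₀ then (1:ℝ) else 0)| ∂P)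
            * (Real.sqrt n / ((n:ℝ)^2 * p^2)) / (ε/2)
        ≤ ((n:ℝ) * C) * (Real.sqrt n / ((n:ℝ)^2 * p^2)) / (ε/2) := by gcongr
      _ = (C/(p^2*(ε/2))) * (Real.sqrt n)⁻¹ := by
          field_simp
          linear_combination C * hss
  have hev2 : ∀ᶠ n : ℕ in atTop,
      P {ω | M ≤ (Real.sqrt n / ((n:ℝ) * p)) * |((⌈(n:ℝ) * p⌉₊ : ℕ) : ℝ)
          - ∑ j ∈ Finset.range n, (if W j ω ≤ t₀ then (1:ℝ) else 0)|} ≤ ENNReal.ofReal δ := by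
    filter_upwards [eventually_ge_atTop 1] with n hn
    have hn0 : (0:ℝ) < n := by exact_mod_cast hn
    have hnp : 0 < (n:ℝ) * p := by positivity
    have hs0 : 0 < Real.sqrt n := Real.sqrt_pos.mpr hn0
    have hss : Real.sqrt n * Real.sqrt n = (n:ℝ) := Real.mul_self_sqrt hn0.le
    have h1le : 1 ≤ Real.sqrt n := Real.one_le_sqrt.mpr (by exact_mod_cast hn)
    set N : ℕ := ⌈(n:ℝ) * p⌉₊ with hN
    have hNlb : (n:ℝ) * p ≤ N := Nat.le_ceil _
    have hNub : (N:ℝ) ≤ (n:ℝ) * p + 1 := (Nat.ceil_lt_add_one hnp.le).le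
    have hKm := hKmeas t₀ n
    have hZm : Measurable (fun ω => (Real.sqrt n / ((n:ℝ) * p)) * |(N : ℝ)
        - ∑ j ∈ Finset.range n, (if W j ω ≤ t₀ then (1:ℝ) else 0)|) :=
      ((measurable_const.sub hKm).abs.const_mul _)
    have hZb : ∀ ω, |(N : ℝ) - ∑ j ∈ Finset.range n, (if W j ω ≤ t₀ then (1:ℝ) else 0)|
        ≤ |∑ j ∈ Finset.range n, (if W j ω ≤ t₀ then (1:ℝ) else 0) - (n:ℝ)*p| + 1 := by
      intro ω
      have h2 : |(N : ℝ) - (n:ℝ)*p| ≤ 1 := by rw [abs_le]; constructor <;> linarith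
      calc |(N : ℝ) - ∑ j ∈ Finset.range n, (if W j ω ≤ t₀ then (1:ℝ) else 0)|
          ≤ |(N : ℝ) - (n:ℝ)*p| + |(n:ℝ)*p
              - ∑ j ∈ Finset.range n, (if W j ω ≤ t₀ then (1:ℝ) else 0)| := abs_sub_le _ _ _
        _ ≤ 1 + |∑ j ∈ Finset.range n, (if W j ω ≤ t₀ then (1:ℝ) else 0) - (n:ℝ)*p| := by
            rw [abs_sub_comm ((n:ℝ)*p) _]
            exact add_le_add h2 le_rfl
        _ = |∑ j ∈ Finset.range n, (if W j ω ≤ t₀ then (1:ℝ) else 0) - (n:ℝ)*p| + 1 := by ring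
    have hcmint : Integrable (fun ω =>
        |∑ j ∈ Finset.range n, (if W j ω ≤ t₀ then (1:ℝ) else 0) - (n:ℝ)*p|) P :=
      ((hKint t₀ n).sub (integrable_const _)).abs
    have hZint0 : Integrable (fun ω => |(N : ℝ)
        - ∑ j ∈ Finset.range n, (if W j ω ≤ t₀ then (1:ℝ) else 0)|) P :=
      ((integrable_const _).sub (hKint t₀ n)).abs
    have hZint : Integrable (fun ω => (Real.sqrt n / ((n:ℝ) * p)) * |(N : ℝ)
        - ∑ j ∈ Finset.range n, (if W j ω ≤ t₀ then (1:ℝ) else 0)|) P :=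
      hZint0.const_mul _
    have habs := TrimAux.count_abs_moment P W hmeas hindep hident t₀ hn
    rw [← hcdf t₀, hFt₀] at habs
    have hZmean : ∫ ω, (Real.sqrt n / ((n:ℝ) * p)) * |(N : ℝ)
        - ∑ j ∈ Finset.range n, (if W j ω ≤ t₀ then (1:ℝ) else 0)| ∂P ≤ 2/p := by
      rw [integral_const_mul]
      have hint1 : ∫ ω, |(N : ℝ)
          - ∑ j ∈ Finset.range n, (if W j ω ≤ t₀ then (1:ℝ) else 0)| ∂P
          ≤ Real.sqrt n + 1 := by
        calc ∫ ω, |(N : ℝ) - ∑ j ∈ Finset.range n,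
              (if W j ω ≤ t₀ then (1:ℝ) else 0)| ∂P
            ≤ ∫ ω, (|∑ j ∈ Finset.range n, (if W j ω ≤ t₀ then (1:ℝ) else 0) - (n:ℝ)*p|
                + 1) ∂P := by
              apply integral_mono hZint0 (hcmint.add (integrable_const 1))
              intro ω
              exact hZb ω
          _ = (∫ ω, |∑ j ∈ Finset.range n,
                (if W j ω ≤ t₀ then (1:ℝ) else 0) - (n:ℝ)*p| ∂P) + 1 := by
              rw [integral_add hcmint (integrable_const 1), integral_const]
              simp
          _ ≤ Real.sqrt n + 1 := by
              apply add_le_add _ le_rfl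
              exact habs
      calc (Real.sqrt n / ((n:ℝ) * p)) * ∫ ω, |(N : ℝ)
            - ∑ j ∈ Finset.range n, (if W j ω ≤ t₀ then (1:ℝ) else 0)| ∂P
          ≤ (Real.sqrt n / ((n:ℝ) * p)) * (Real.sqrt n + 1) := by
            apply mul_le_mul_of_nonneg_left hint1 (by positivity)
        _ ≤ (Real.sqrt n / ((n:ℝ) * p)) * (2 * Real.sqrt n) := by
            apply mul_le_mul_of_nonneg_left (by linarith) (by positivity)
        _ = 2/p := by
            field_simp
            linear_combination hss
    have hmark := TrimAux.markov_meas P hZm hZint (fun ω => by positivity) hM0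
    refine le_trans hmark (ENNReal.ofReal_le_ofReal ?_)
    have hMδ : (2/p) / M = δ := by
      rw [hM]
      field_simp
    rw [← hMδ]
    gcongr
  -- combine everything
  filter_upwards [hev1, hev2, hev3, hev4, eventually_ge_atTop 1] with n h1 h2 h3 h4 hn
  have hn0 : (0:ℝ) < n := by exact_mod_cast hn
  have hnp : 0 < (n:ℝ) * p := by positivity
  set N : ℕ := ⌈(n:ℝ) * p⌉₊ with hN
  have hN1 : 1 ≤ N := Nat.one_le_iff_ne_zero.mpr (Nat.pos_iff_ne_zero.mp (Nat.ceil_pos.mpr hnp))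
  have hNn : N ≤ n := Nat.ceil_le.mpr (by nlinarith)
  have hNlb : (n:ℝ) * p ≤ N := Nat.le_ceil _
  have hNub : (N:ℝ) ≤ (n:ℝ) * p + 1 := (Nat.ceil_lt_add_one hnp.le).le
  have hincl : {ω | ε ≤ |Real.sqrt n * ((1 / (N : ℝ)) *
          (∑ i ∈ Finset.Icc 1 N, orderStat W n i ω) - μl)
        - Real.sqrt n * ((1 / (n : ℝ)) * ∑ i ∈ Finset.range n, xiFn W Q p i ω)|}
      ⊆ {ω | ε/2 ≤ |∑ j ∈ Finset.range n, (W j ω - t₀) * (if W j ω ≤ t₀ then 1 else 0)|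
            * (Real.sqrt n / ((n:ℝ)^2 * p^2))}
        ∪ ({ω | M ≤ (Real.sqrt n / ((n:ℝ) * p)) * |((N : ℕ) : ℝ)
            - ∑ j ∈ Finset.range n, (if W j ω ≤ t₀ then (1:ℝ) else 0)|}
          ∪ ({ω | (n:ℝ) * (qp - p) ≤ |∑ j ∈ Finset.range n,
              (if W j ω ≤ t₀ + c then (1:ℝ) else 0) - n * qp|}
            ∪ {ω | (n:ℝ) * (p - qm) ≤ |∑ j ∈ Finset.range n,
              (if W j ω ≤ t₀ - c then (1:ℝ) else 0) - n * qm|})) := by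
    intro ω hω
    simp only [Set.mem_setOf_eq] at hω
    by_contra hcon
    simp only [Set.mem_union, Set.mem_setOf_eq] at hcon
    push_neg at hcon
    obtain ⟨hc1, hc2, hc3, hc4⟩ := hcon
    have hiffp : orderStat W n N ω ≤ t₀ + c ↔ (N:ℝ) ≤ ∑ j ∈ Finset.range n,
        (if W j ω ≤ t₀ + c then (1:ℝ) else 0) :=
      TrimAux.det_le_iff (fun j => W j ω) n (t₀ + c) hN1 hNn
    have hiffm : orderStat W n N ω ≤ t₀ - c ↔ (N:ℝ) ≤ ∑ j ∈ Finset.range n,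
        (if W j ω ≤ t₀ - c then (1:ℝ) else 0) :=
      TrimAux.det_le_iff (fun j => W j ω) n (t₀ - c) hN1 hNn
    have hccp : (((Finset.range n).filter (fun j =>
          (List.insertionSort (· ≤ ·) (List.ofFn fun j : Fin n => W j ω)).getD j 0
            ≤ t₀ + c)).card : ℝ)
        = ∑ j ∈ Finset.range n, (if W j ω ≤ t₀ + c then (1:ℝ) else 0) :=
      TrimAux.cnt_cast (fun j => W j ω) n (t₀ + c)
    have hexp : (n:ℝ) * (qp - p) = n * qp - n * p := by ring
    have hKpgt : (n:ℝ) * p < ∑ j ∈ Finset.range n,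
        (if W j ω ≤ t₀ + c then (1:ℝ) else 0) := by
      have h := abs_lt.mp hc3
      linarith [h.1]
    have hNleK : (N:ℝ) ≤ ∑ j ∈ Finset.range n,
        (if W j ω ≤ t₀ + c then (1:ℝ) else 0) := by
      rw [← hccp] at hKpgt ⊢
      have hlt : (N:ℝ) < (((Finset.range n).filter (fun j =>
          (List.insertionSort (· ≤ ·) (List.ofFn fun j : Fin n => W j ω)).getD j 0
            ≤ t₀ + c)).card : ℝ) + 1 := by linarith
      have hlt' : N < ((Finset.range n).filter (fun j =>
          (List.insertionSort (· ≤ ·) (List.ofFn fun j : Fin n => W j ω)).getD j 0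
            ≤ t₀ + c)).card + 1 := by exact_mod_cast hlt
      exact_mod_cast Nat.lt_succ_iff.mp hlt'
    have hordup : orderStat W n N ω ≤ t₀ + c := hiffp.mpr hNleK
    have hexp2 : (n:ℝ) * (p - qm) = n * p - n * qm := by ring
    have hKmlt : (∑ j ∈ Finset.range n, (if W j ω ≤ t₀ - c then (1:ℝ) else 0))
        < (n:ℝ) * p := by
      have h := abs_lt.mp hc4
      linarith [h.2]
    have hordlo : t₀ - c < orderStat W n N ω := by
      by_contra hle
      push_neg at hle
      have := hiffm.mp hle
      linarith
    have hD : |orderStat W n N ω - t₀| ≤ c := by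
      rw [abs_le]
      constructor <;> linarith
    have hG := hGb n hn ω
    have hZD : ((Real.sqrt n / ((n:ℝ) * p)) * |((N : ℕ) : ℝ)
          - ∑ j ∈ Finset.range n, (if W j ω ≤ t₀ then (1:ℝ) else 0)|)
        * |orderStat W n N ω - t₀| ≤ M * c := by
      apply mul_le_mul hc2.le hD (abs_nonneg _) hM0.le
    have hMc : M * c = ε/4 := by
      rw [hc]
      field_simp
    rw [hMc] at hZD
    linarith
  calc P {ω | ε ≤ |Real.sqrt n * ((1 / (N : ℝ)) *
          (∑ i ∈ Finset.Icc 1 N, orderStat W n i ω) - μl)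
        - Real.sqrt n * ((1 / (n : ℝ)) * ∑ i ∈ Finset.range n, xiFn W Q p i ω)|}
      ≤ P ({ω | ε/2 ≤ |∑ j ∈ Finset.range n, (W j ω - t₀) * (if W j ω ≤ t₀ then 1 else 0)|
            * (Real.sqrt n / ((n:ℝ)^2 * p^2))})
        + (P ({ω | M ≤ (Real.sqrt n / ((n:ℝ) * p)) * |((N : ℕ) : ℝ)
            - ∑ j ∈ Finset.range n, (if W j ω ≤ t₀ then (1:ℝ) else 0)|})
          + (P ({ω | (n:ℝ) * (qp - p) ≤ |∑ j ∈ Finset.range n,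
              (if W j ω ≤ t₀ + c then (1:ℝ) else 0) - n * qp|})
            + P ({ω | (n:ℝ) * (p - qm) ≤ |∑ j ∈ Finset.range n,
              (if W j ω ≤ t₀ - c then (1:ℝ) else 0) - n * qm|}))) := by
        refine le_trans (measure_mono hincl) ?_
        refine le_trans (measure_union_le _ _) (add_le_add le_rfl ?_)
        refine le_trans (measure_union_le _ _) (add_le_add le_rfl ?_)
        exact measure_union_le _ _
    _ ≤ ENNReal.ofReal δ + (ENNReal.ofReal δ + (ENNReal.ofReal δ + ENNReal.ofReal δ)) :=
        add_le_add h1 (add_le_add h2 (add_le_add h3 h4))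
    _ = ENNReal.ofReal (4 * δ) := by
        rw [← ENNReal.ofReal_add hδ0.le hδ0.le,
          ← ENNReal.ofReal_add hδ0.le (by linarith),
          ← ENNReal.ofReal_add hδ0.le (by linarith)]
        congr 1
        ring
    _ ≤ η := hδη
end

section
/- Let F be an invertible distribution function (F^{-1} continuous and strictly increasing on (0,1)) with ∫_0^1 |F^{-1}(q)| dq < ∞, and define the split function B(F^{-1}, p) = p μ_l(p)^2 + (1−p) μ_u(p)^2 − (∫_0^1 F^{-1}(q) dq)^2 for 0 < p < 1. Then B(F^{-1}, ·) is differentiable at every p in (0,1) and its derivative equals (μ_u(p) − μ_l(p)) (μ_u(p) + μ_l(p) − 2 F^{-1}(p)). Consequently, any interior maximizer p_0 of B(F^{-1}, ·) satisfies (μ_u(p_0) − μ_l(p_0)) (μ_u(p_0) + μ_l(p_0) − 2 F^{-1}(p_0)) = 0. -/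
open MeasureTheory Set intervalIntegral

/-- `μ_l(p) = (1/p)∫_0^p F⁻¹(q) dq`, with `Q = F⁻¹`. -/
noncomputable def lowerMean (Q : ℝ → ℝ) (p : ℝ) : ℝ := (1 / p) * ∫ q in (0 : ℝ)..p, Q q

/-- `μ_u(p) = (1/(1−p))∫_p^1 F⁻¹(q) dq`, with `Q = F⁻¹`. -/
noncomputable def upperMean (Q : ℝ → ℝ) (p : ℝ) : ℝ := (1 / (1 - p)) * ∫ q in p..(1 : ℝ), Q q

/-- Hartigan's split function `B(F⁻¹, p) = p μ_l(p)² + (1−p) μ_u(p)² − (∫_0^1 F⁻¹(q) dq)²`. -/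
noncomputable def splitFun (Q : ℝ → ℝ) (p : ℝ) : ℝ :=
  p * (lowerMean Q p) ^ 2 + (1 - p) * (upperMean Q p) ^ 2 - (∫ q in (0 : ℝ)..(1 : ℝ), Q q) ^ 2

/-- **Derivative of the split function and the split-point equation.**
If `F⁻¹ = Q` is continuous and strictly increasing on `(0,1)` and `∫_0^1 |F⁻¹| < ∞`, then the
split function is differentiable on `(0,1)` with derivative
`(μ_u(p) − μ_l(p))(μ_u(p) + μ_l(p) − 2F⁻¹(p))`; consequently any interior maximizer `p₀`
satisfies `(μ_u(p₀) − μ_l(p₀))(μ_u(p₀) + μ_l(p₀) − 2F⁻¹(p₀)) = 0`. -/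
theorem splitFun_hasDerivAt_and_split_point_equation
    (Q : ℝ → ℝ) (hQcont : ContinuousOn Q (Ioo (0 : ℝ) 1))
    (hQmono : StrictMonoOn Q (Ioo (0 : ℝ) 1))
    (hQint : IntervalIntegrable Q MeasureTheory.volume 0 1) :
    (∀ p ∈ Ioo (0 : ℝ) 1,
      HasDerivAt (splitFun Q)
        ((upperMean Q p - lowerMean Q p) * (upperMean Q p + lowerMean Q p - 2 * Q p)) p) ∧
    (∀ p₀ ∈ Ioo (0 : ℝ) 1, IsMaxOn (splitFun Q) (Ioo (0 : ℝ) 1) p₀ →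
      (upperMean Q p₀ - lowerMean Q p₀) * (upperMean Q p₀ + lowerMean Q p₀ - 2 * Q p₀) = 0) := by
  set I : ℝ := ∫ q in (0 : ℝ)..(1 : ℝ), Q q with hI
  set g : ℝ → ℝ := fun p => ∫ q in (0 : ℝ)..p, Q q with hg
  -- integrability on subintervals
  have hint : ∀ p ∈ Ioo (0 : ℝ) 1, IntervalIntegrable Q MeasureTheory.volume 0 p := by
    intro p hp
    exact hQint.mono_set (by
      rw [uIcc_of_le (le_of_lt hp.1), uIcc_of_le (by norm_num : (0:ℝ) ≤ 1)]
      exact Icc_subset_Icc le_rfl hp.2.le)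
  have hint' : ∀ p ∈ Ioo (0 : ℝ) 1, IntervalIntegrable Q MeasureTheory.volume p 1 := by
    intro p hp
    exact hQint.mono_set (by
      rw [uIcc_of_le hp.2.le, uIcc_of_le (by norm_num : (0:ℝ) ≤ 1)]
      exact Icc_subset_Icc hp.1.le le_rfl)
  -- derivative of g
  have hgderiv : ∀ p ∈ Ioo (0 : ℝ) 1, HasDerivAt g (Q p) p := by
    intro p hp
    exact intervalIntegral.integral_hasDerivAt_right (hint p hp)
      (hQcont.stronglyMeasurableAtFilter isOpen_Ioo p hp)
      (hQcont.continuousAt (isOpen_Ioo.mem_nhds hp))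
  -- upper integral expression
  have hsplit : ∀ p ∈ Ioo (0 : ℝ) 1, (∫ q in p..(1:ℝ), Q q) = I - g p := by
    intro p hp
    have := intervalIntegral.integral_add_adjacent_intervals (hint p hp) (hint' p hp)
    simp only [hg, hI]
    linarith [this]
  -- main derivative claim
  have main : ∀ p ∈ Ioo (0 : ℝ) 1,
      HasDerivAt (splitFun Q)
        ((upperMean Q p - lowerMean Q p) * (upperMean Q p + lowerMean Q p - 2 * Q p)) p := by
    intro p hp
    have hp0 : p ≠ 0 := ne_of_gt hp.1
    have hp1 : (1 : ℝ) - p ≠ 0 := by have := hp.2; intro h; linarith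
    set f : ℝ → ℝ := fun x => (g x) ^ 2 / x + (I - g x) ^ 2 / (1 - x) - I ^ 2 with hf
    have heq : splitFun Q =ᶠ[nhds p] f := by
      filter_upwards [isOpen_Ioo.mem_nhds hp] with x hx
      have hx0 : x ≠ 0 := ne_of_gt hx.1
      have hx1 : (1 : ℝ) - x ≠ 0 := by have := hx.2; intro h; linarith
      simp only [splitFun, lowerMean, upperMean, hf, hsplit x hx, ← hI, ← hg]
      field_simp
      ring
    have hgp := hgderiv p hp
    have h1 : HasDerivAt (fun x => (g x) ^ 2 / x)
        (((2 * g p ^ 1 * Q p) * p - (g p) ^ 2 * 1) / p ^ 2) p :=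
      (hgp.pow 2).div (hasDerivAt_id p) hp0
    have h2 : HasDerivAt (fun x => (I - g x) ^ 2 / (1 - x))
        (((2 * (I - g p) ^ 1 * (0 - Q p)) * (1 - p) - (I - g p) ^ 2 * (0 - 1)) / (1 - p) ^ 2) p :=
      (((hasDerivAt_const p I).sub hgp).pow 2).div
        ((hasDerivAt_const p 1).sub (hasDerivAt_id p)) hp1
    have hD : HasDerivAt f
        ((((2 * g p ^ 1 * Q p) * p - (g p) ^ 2 * 1) / p ^ 2) +
          (((2 * (I - g p) ^ 1 * (0 - Q p)) * (1 - p) - (I - g p) ^ 2 * (0 - 1)) / (1 - p) ^ 2)) p :=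
      (h1.add h2).sub_const (I ^ 2)
    have := hD.congr_of_eventuallyEq heq
    convert this using 1
    · rfl
    · rfl
    simp only [upperMean, lowerMean, hsplit p hp, ← hI, ← hg]
    field_simp
    ring
  refine ⟨main, ?_⟩
  intro p₀ hp₀ hmax
  have hloc : IsLocalMax (splitFun Q) p₀ :=
    hmax.isLocalMax (isOpen_Ioo.mem_nhds hp₀)
  exact hloc.hasDerivAt_eq_zero (main p₀ hp₀)
end

section
/- Let W_1 be a standard normal random variable, with distribution function F = Φ and density f = φ. Then the cross-over function satisfies G(1/2) = 0 and the asymptotic variance satisfies Var(θ_{1/2}) = 2π − 4. -/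
open MeasureTheory ProbabilityTheory Set

/-- The influence function `θ_p` of the rv `W₁`, for distribution `F` with density `f`
and quantile function `Q = F⁻¹`. -/
noncomputable def thetaRV {Ω : Type*} (W : Ω → ℝ) (f Q : ℝ → ℝ) (p : ℝ) (ω : Ω) : ℝ :=
  (1 / p) * (W ω * (if W ω ≤ Q p then 1 else 0) - Q p * (if W ω ≤ Q p then 1 else 0))
    + (1 / (1 - p)) * (W ω * (if W ω > Q p then 1 else 0)
      - Q p * (if W ω > Q p then 1 else 0))
    + 2 * (if W ω ≤ Q p then 1 else 0) / f (Q p)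

namespace CrossAux

open Filter Real Topology

noncomputable def phi (x : ℝ) : ℝ := Real.exp (-(1/2) * x ^ 2) / Real.sqrt (2 * π)

lemma phi_eq_pdf : phi = gaussianPDFReal 0 1 := by
  funext x
  simp only [phi, gaussianPDFReal, NNReal.coe_one, mul_one, sub_zero, div_eq_mul_inv, mul_comm]
  ring_nf

lemma phi_nonneg (x : ℝ) : 0 ≤ phi x := by
  unfold phi; positivity

lemma phi_even (x : ℝ) : phi (-x) = phi x := by simp [phi]

lemma measurable_phi : Measurable phi := by
  unfold phi; fun_prop

lemma integrable_phi : Integrable phi := phi_eq_pdf ▸ integrable_gaussianPDFReal 0 1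

lemma integral_phi : ∫ x, phi x = 1 := by
  rw [phi_eq_pdf]; exact integral_gaussianPDFReal_eq_one 0 one_ne_zero

lemma integrable_id_phi : Integrable (fun x => x * phi x) := by
  have h := (integrable_mul_exp_neg_mul_sq (by norm_num : (0:ℝ) < 1/2)).mul_const
    (Real.sqrt (2 * π))⁻¹
  refine h.congr (Eventually.of_forall fun x => ?_)
  simp only [phi, div_eq_mul_inv]
  ring

lemma integrable_sq_phi : Integrable (fun x => x ^ 2 * phi x) := by
  have h := (integrable_rpow_mul_exp_neg_mul_sq (by norm_num : (0:ℝ) < 1/2)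
    (by norm_num : (-1:ℝ) < 2)).mul_const (Real.sqrt (2 * π))⁻¹
  refine h.congr (Eventually.of_forall fun x => ?_)
  have hx : x ^ (2:ℝ) = x ^ 2 := by
    rw [show (2:ℝ) = ((2:ℕ):ℝ) by norm_num, Real.rpow_natCast]
  simp only [phi, div_eq_mul_inv, hx]
  ring

lemma split_integral (g : ℝ → ℝ) (hg : Integrable g) :
    (∫ x in Iic (0:ℝ), g x) + ∫ x in Ioi (0:ℝ), g x = ∫ x, g x := by
  rw [← setIntegral_union (Iic_disjoint_Ioi le_rfl) measurableSet_Ioi hg.integrableOn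
    hg.integrableOn, Iic_union_Ioi, setIntegral_univ]

lemma int_Iic_phi : ∫ x in Iic (0:ℝ), phi x = 1/2 := by
  have h1 : ∫ x in Iic (0:ℝ), phi x = ∫ x in Ioi (0:ℝ), phi x := by
    rw [show (Ioi (0:ℝ)) = Ioi (-(0:ℝ)) by norm_num, ← integral_comp_neg_Iic]
    simp [phi_even]
  have h2 := split_integral phi integrable_phi
  rw [integral_phi] at h2
  linarith

lemma int_Ioi_xexp : ∫ x in Ioi (0:ℝ), x * Real.exp (-(1/2) * x ^ 2) = 1 := by
  have hderiv : ∀ x ∈ Ici (0:ℝ), HasDerivAt (fun y => -Real.exp (-(1/2) * y ^ 2))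
      (x * Real.exp (-(1/2) * x ^ 2)) x := by
    intro x _
    have h := (((hasDerivAt_pow 2 x).const_mul (-(1/2):ℝ)).exp).neg
    refine h.congr_deriv ?_
    ring
  have htend : Tendsto (fun y : ℝ => -Real.exp (-(1/2) * y ^ 2)) atTop (𝓝 (-0)) := by
    refine Tendsto.neg ?_
    exact tendsto_exp_atBot.comp
      ((tendsto_pow_atTop two_ne_zero).const_mul_atTop_of_neg (by norm_num))
  have := integral_Ioi_of_hasDerivAt_of_tendsto' hderiv
    (integrable_mul_exp_neg_mul_sq (by norm_num : (0:ℝ) < 1/2)).integrableOn htend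
  simpa using this

lemma int_Ioi_xphi : ∫ x in Ioi (0:ℝ), x * phi x = (Real.sqrt (2 * π))⁻¹ := by
  have : ∀ x, x * phi x = (x * Real.exp (-(1/2) * x ^ 2)) * (Real.sqrt (2 * π))⁻¹ := by
    intro x; simp only [phi, div_eq_mul_inv]; ring
  simp_rw [this]
  rw [integral_mul_const, int_Ioi_xexp, one_mul]

lemma int_Iic_xphi : ∫ x in Iic (0:ℝ), x * phi x = -(Real.sqrt (2 * π))⁻¹ := by
  have h := integral_comp_neg_Iic (0:ℝ) (fun x => x * phi x)
  simp only [neg_zero] at h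
  have h2 : ∫ x in Iic (0:ℝ), -x * phi (-x) = ∫ x in Iic (0:ℝ), -(x * phi x) := by
    refine setIntegral_congr_fun measurableSet_Iic (fun x _ => ?_)
    rw [phi_even]; ring
  rw [h2, integral_neg] at h
  rw [← int_Ioi_xphi, ← h, neg_neg]

lemma int_xphi : ∫ x, x * phi x = 0 := by
  rw [← split_integral _ integrable_id_phi, int_Iic_xphi, int_Ioi_xphi]
  ring

lemma integrableOn_sqexp : IntegrableOn (fun x => x ^ 2 * Real.exp (-(1/2) * x ^ 2)) (Ioi 0) := by
  have h := integrable_rpow_mul_exp_neg_mul_sq (by norm_num : (0:ℝ) < 1/2)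
    (by norm_num : (-1:ℝ) < 2)
  refine (h.congr (Eventually.of_forall fun x => ?_)).integrableOn
  norm_num [Real.rpow_two]

lemma int_Ioi_sq_sub : ∫ x in Ioi (0:ℝ),
    (x ^ 2 * Real.exp (-(1/2) * x ^ 2) - Real.exp (-(1/2) * x ^ 2)) = 0 := by
  have hderiv : ∀ x ∈ Ici (0:ℝ), HasDerivAt (fun y => -y * Real.exp (-(1/2) * y ^ 2))
      (x ^ 2 * Real.exp (-(1/2) * x ^ 2) - Real.exp (-(1/2) * x ^ 2)) x := by
    intro x _
    have hE : HasDerivAt (fun y : ℝ => Real.exp (-(1/2) * y ^ 2))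
        (-(1/2) * (2 * x) * Real.exp (-(1/2) * x ^ 2)) x := by
      have h := ((hasDerivAt_pow 2 x).const_mul (-(1/2):ℝ)).exp
      convert h using 1
      ring_nf
    have h2 := (hasDerivAt_id x).neg.mul hE
    refine h2.congr_deriv ?_
    simp only [Pi.neg_apply, id_eq]
    ring
  have hint : IntegrableOn (fun x => x ^ 2 * Real.exp (-(1/2) * x ^ 2)
      - Real.exp (-(1/2) * x ^ 2)) (Ioi 0) :=
    integrableOn_sqexp.sub (integrable_exp_neg_mul_sq (by norm_num : (0:ℝ) < 1/2)).integrableOn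
  have htend : Tendsto (fun y : ℝ => -y * Real.exp (-(1/2) * y ^ 2)) atTop (𝓝 0) := by
    have hfun : (fun y : ℝ => -y * Real.exp (-(1/2) * y ^ 2))
        = fun y : ℝ => -(y * Real.exp (-(1/2) * y ^ 2)) := by funext y; ring
    rw [hfun, show (0:ℝ) = -0 by norm_num]
    refine Tendsto.neg ?_
    have hlo := rpow_mul_exp_neg_mul_sq_isLittleO_exp_neg (by norm_num : (0:ℝ) < 1/2) (1:ℝ)
    have h0 : Tendsto (fun x : ℝ => Real.exp (-(1/2) * x)) atTop (𝓝 0) :=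
      tendsto_exp_atBot.comp (tendsto_id.const_mul_atTop_of_neg (by norm_num))
    have := hlo.trans_tendsto h0
    refine this.congr' ?_
    filter_upwards [eventually_gt_atTop (0:ℝ)] with x hx
    rw [Real.rpow_one]
  have := integral_Ioi_of_hasDerivAt_of_tendsto' hderiv hint htend
  simpa using this

lemma int_Ioi_sqphi : ∫ x in Ioi (0:ℝ), x ^ 2 * phi x = 1/2 := by
  have hsplit : ∫ x in Ioi (0:ℝ), x ^ 2 * Real.exp (-(1/2) * x ^ 2)
      = ∫ x in Ioi (0:ℝ), Real.exp (-(1/2) * x ^ 2) := by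
    have := int_Ioi_sq_sub
    rwa [integral_sub integrableOn_sqexp
      (integrable_exp_neg_mul_sq (by norm_num : (0:ℝ) < 1/2)).integrableOn, sub_eq_zero] at this
  have hgauss : ∫ x in Ioi (0:ℝ), Real.exp (-(1/2) * x ^ 2) = Real.sqrt (2 * π) / 2 := by
    rw [integral_gaussian_Ioi, show π/(1/2) = 2*π by ring]
  have : ∀ x, x ^ 2 * phi x = (x ^ 2 * Real.exp (-(1/2) * x ^ 2)) * (Real.sqrt (2 * π))⁻¹ := by
    intro x; simp only [phi, div_eq_mul_inv]; ring
  simp_rw [this]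
  rw [integral_mul_const, hsplit, hgauss]
  have hne : Real.sqrt (2*π) ≠ 0 := by positivity
  field_simp

lemma int_sqphi : ∫ x, x ^ 2 * phi x = 1 := by
  have h1 : ∫ x in Iic (0:ℝ), x ^ 2 * phi x = ∫ x in Ioi (0:ℝ), x ^ 2 * phi x := by
    rw [show (Ioi (0:ℝ)) = Ioi (-(0:ℝ)) by norm_num,
      ← integral_comp_neg_Iic (0:ℝ) (fun x => x ^ 2 * phi x)]
    refine setIntegral_congr_fun measurableSet_Iic (fun x _ => ?_)
    rw [phi_even]; ring
  have h2 := split_integral _ integrable_sq_phi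
  rw [h1, int_Ioi_sqphi] at h2
  rw [← h2]; norm_num

lemma int_Iic_c_phi (c : ℝ) : (∫ x in Iic c, phi x) + ∫ x in Ioi c, phi x = 1 := by
  rw [← integral_phi,
    ← setIntegral_union (Iic_disjoint_Ioi le_rfl) measurableSet_Ioi
      integrable_phi.integrableOn integrable_phi.integrableOn, Iic_union_Ioi, setIntegral_univ]

lemma F_neg (y : ℝ) : ∫ x in Iic (-y), phi x = 1 - ∫ x in Iic y, phi x := by
  have h1 : ∫ x in Iic (-y), phi x = ∫ x in Ioi y, phi x := by
    have h0 : ∫ x in Iic (-y), phi x = ∫ x in Iic (-y), phi (-x) :=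
      setIntegral_congr_fun measurableSet_Iic (fun x _ => (phi_even x).symm)
    rw [h0, integral_comp_neg_Iic (-y) phi, neg_neg]
  have := int_Iic_c_phi y
  linarith

/-! ### Integrals against the Gaussian measure -/

lemma gauss_eq : gaussianReal 0 1
    = MeasureTheory.Measure.withDensity volume (fun x => ((phi x).toNNReal : ENNReal)) := by
  rw [gaussianReal_of_var_ne_zero 0 one_ne_zero]
  congr 1
  funext x
  rw [gaussianPDF, ← phi_eq_pdf, ENNReal.ofReal]

lemma integral_gauss (g : ℝ → ℝ) : ∫ x, g x ∂(gaussianReal 0 1) = ∫ x, phi x * g x := by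
  rw [gauss_eq, integral_withDensity_eq_integral_smul measurable_phi.real_toNNReal g]
  congr 1
  funext x
  rw [NNReal.smul_def, Real.coe_toNNReal _ (phi_nonneg x), smul_eq_mul]

lemma integrable_gauss_iff (g : ℝ → ℝ) :
    Integrable g (gaussianReal 0 1) ↔ Integrable (fun x => phi x * g x) volume := by
  rw [gauss_eq, integrable_withDensity_iff_integrable_smul measurable_phi.real_toNNReal]
  constructor <;> intro h <;> refine h.congr (Filter.Eventually.of_forall fun x => ?_) <;>
    simp only [NNReal.smul_def, Real.coe_toNNReal _ (phi_nonneg x), smul_eq_mul]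

/-! ### The function `g` with `θ_{1/2} = g ∘ W` -/

noncomputable def chi (x : ℝ) : ℝ := if x ≤ 0 then 1 else 0

noncomputable def gfun (x : ℝ) : ℝ := 2 * x + (2 * Real.sqrt (2 * π)) * chi x

lemma measurable_chi : Measurable chi :=
  Measurable.ite measurableSet_Iic measurable_const measurable_const

lemma measurable_gfun : Measurable gfun :=
  (measurable_const.mul measurable_id).add (measurable_chi.const_mul _)

lemma phig_eq : (fun x => phi x * gfun x)
    = fun x => 2 * (x * phi x) + (2 * Real.sqrt (2 * π)) * ((Iic (0:ℝ)).indicator phi x) := by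
  funext x
  unfold gfun chi
  rw [Set.indicator_apply]
  by_cases h : x ≤ 0 <;> simp [h, Set.mem_Iic] <;> ring

lemma integrable_phig : Integrable (fun x => phi x * gfun x) := by
  rw [phig_eq]
  exact ((integrable_id_phi.const_mul 2)).add
    ((integrable_phi.indicator measurableSet_Iic).const_mul _)

lemma int_phig : ∫ x, phi x * gfun x = Real.sqrt (2 * π) := by
  rw [phig_eq, integral_add ((integrable_id_phi.const_mul 2))
    ((integrable_phi.indicator measurableSet_Iic).const_mul _),
    integral_const_mul, integral_const_mul, int_xphi,
    integral_indicator measurableSet_Iic, int_Iic_phi]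
  ring

lemma phigsq_eq : (fun x => phi x * gfun x ^ 2)
    = fun x => 4 * (x ^ 2 * phi x)
      + (8 * Real.sqrt (2 * π)) * ((Iic (0:ℝ)).indicator (fun t => t * phi t) x)
      + (4 * Real.sqrt (2 * π) ^ 2) * ((Iic (0:ℝ)).indicator phi x) := by
  funext x
  unfold gfun chi
  rw [Set.indicator_apply, Set.indicator_apply]
  by_cases h : x ≤ 0 <;> simp [h, Set.mem_Iic] <;> ring

lemma integrable_phigsq : Integrable (fun x => phi x * gfun x ^ 2) := by
  rw [phigsq_eq]
  exact (((integrable_sq_phi.const_mul 4)).add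
    ((integrable_id_phi.indicator measurableSet_Iic).const_mul _)).add
    ((integrable_phi.indicator measurableSet_Iic).const_mul _)

lemma int_phigsq : ∫ x, phi x * gfun x ^ 2 = 4 * π - 4 := by
  have hs : Real.sqrt (2 * π) ^ 2 = 2 * π := Real.sq_sqrt (by positivity)
  have hne : Real.sqrt (2 * π) ≠ 0 := by positivity
  have hA : Integrable (fun x => 4 * (x ^ 2 * phi x)) := integrable_sq_phi.const_mul 4
  have hB : Integrable (fun x =>
      (8 * Real.sqrt (2 * π)) * ((Iic (0:ℝ)).indicator (fun t => t * phi t) x)) :=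
    (integrable_id_phi.indicator measurableSet_Iic).const_mul _
  have hC : Integrable (fun x =>
      (4 * Real.sqrt (2 * π) ^ 2) * ((Iic (0:ℝ)).indicator phi x)) :=
    (integrable_phi.indicator measurableSet_Iic).const_mul _
  have hAB : Integrable (fun x => 4 * (x ^ 2 * phi x)
      + (8 * Real.sqrt (2 * π)) * ((Iic (0:ℝ)).indicator (fun t => t * phi t) x)) := hA.add hB
  rw [phigsq_eq, integral_add hAB hC, integral_add hA hB,
    integral_const_mul, integral_const_mul, integral_const_mul, int_sqphi,
    integral_indicator measurableSet_Iic, integral_indicator measurableSet_Iic,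
    int_Iic_xphi, int_Iic_phi, hs]
  field_simp
  ring

end CrossAux

/-- **Standard normal example.** If `W₁ ~ N(0,1)` with distribution function `F = Φ` and
density `f = φ`, then `G(1/2) = μ_l(1/2) + μ_u(1/2) − 2F⁻¹(1/2) = 0` and
`Var(θ_{1/2}) = 2π − 4`. -/
theorem crossOver_and_variance_std_normal
    {Ω : Type*} [MeasurableSpace Ω] (P : Measure Ω) [IsProbabilityMeasure P]
    (W : Ω → ℝ) (hmeas : Measurable W)
    (hlaw : P.map W = gaussianReal 0 1)
    (F f Q : ℝ → ℝ)
    (hcdf : ∀ x, F x = (P (W ⁻¹' Iic x)).toReal)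
    (hf : ∀ x, f x = Real.exp (-(x ^ 2) / 2) / Real.sqrt (2 * Real.pi))
    (hQ : ∀ p ∈ Ioo (0 : ℝ) 1, F (Q p) = p ∧ ∀ y, F y = p → y = Q p) :
    (1 / (1 / 2 : ℝ)) * (∫ q in (0 : ℝ)..(1 / 2 : ℝ), Q q)
      + (1 / (1 - (1 / 2 : ℝ))) * (∫ q in (1 / 2 : ℝ)..(1 : ℝ), Q q)
      - 2 * Q (1 / 2) = 0 ∧
    variance (thetaRV W f Q (1 / 2)) P = 2 * Real.pi - 4 := by
  open CrossAux in
  have hphiF : ∀ x, F x = ∫ t in Iic x, phi t := by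
    intro x
    rw [hcdf x, ← Measure.map_apply hmeas measurableSet_Iic, hlaw,
      gaussianReal_apply_eq_integral 0 one_ne_zero,
      ENNReal.toReal_ofReal (setIntegral_nonneg measurableSet_Iic
        (fun t _ => gaussianPDFReal_nonneg 0 1 t)), ← phi_eq_pdf]
  have hF0 : F 0 = 1/2 := by rw [hphiF 0]; exact int_Iic_phi
  have hQhalf : Q (1/2) = 0 :=
    ((hQ (1/2) ⟨by norm_num, by norm_num⟩).2 0 (by rw [hF0])).symm
  have hFneg : ∀ y, F (-y) = 1 - F y := by
    intro y; rw [hphiF, hphiF]; exact F_neg y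
  have hQodd : ∀ q ∈ Ioo (0:ℝ) 1, Q (1 - q) = -(Q q) := by
    intro q hq
    refine ((hQ (1-q) ⟨by linarith [hq.2], by linarith [hq.1]⟩).2 (-(Q q)) ?_).symm
    rw [hFneg, (hQ q hq).1]
  have hAB : ∫ q in (0:ℝ)..(1/2:ℝ), Q q = -∫ q in (1/2:ℝ)..(1:ℝ), Q q := by
    have h1 : ∫ x in (1/2:ℝ)..(1:ℝ), Q (1 - x) = ∫ x in (0:ℝ)..(1/2:ℝ), Q x := by
      have h := intervalIntegral.integral_comp_sub_left (a := (1/2:ℝ)) (b := (1:ℝ)) Q 1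
      rw [show (1:ℝ) - 1 = 0 by norm_num, show (1:ℝ) - 1/2 = 1/2 by norm_num] at h
      exact h
    have h2 : ∫ x in (1/2:ℝ)..(1:ℝ), Q (1 - x) = ∫ x in (1/2:ℝ)..(1:ℝ), -(Q x) := by
      refine intervalIntegral.integral_congr_ae ?_
      have h0 : ∀ᵐ x : ℝ, x ≠ (1:ℝ) := by
        rw [ae_iff]
        have : {x : ℝ | ¬ x ≠ 1} = {1} := by ext x; simp
        rw [this]
        exact Real.volume_singleton
      filter_upwards [h0] with x hx hmem
      rw [Set.uIoc_of_le (by norm_num : (1/2:ℝ) ≤ 1)] at hmem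
      have hx1 : 1/2 < x := hmem.1
      have hx2 : x < 1 := lt_of_le_of_ne hmem.2 hx
      have : Q (1 - x) = -(Q x) := hQodd x ⟨by linarith, hx2⟩
      rw [this]
    rw [← h1, h2, intervalIntegral.integral_neg]
  constructor
  · rw [hQhalf, hAB]; ring
  · -- variance part
    have hc : Real.sqrt (2 * Real.pi) ≠ 0 := by positivity
    have hθ : thetaRV W f Q (1/2) = fun ω => gfun (W ω) := by
      funext ω
      unfold thetaRV gfun chi
      rw [hQhalf, hf 0]
      by_cases h : W ω ≤ 0
      · have h' : ¬ (W ω > 0) := not_lt.mpr h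
        simp only [h, h', if_true, if_false]
        field_simp
        norm_num
      · have h' : W ω > 0 := not_le.mp h
        simp only [h, h', if_true, if_false]
        ring
    have haesm : AEStronglyMeasurable gfun (P.map W) :=
      measurable_gfun.aestronglyMeasurable
    have haesm2 : AEStronglyMeasurable (fun x => gfun x ^ 2) (P.map W) :=
      (measurable_gfun.pow_const 2).aestronglyMeasurable
    have hInt1 : Integrable (fun ω => gfun (W ω)) P := by
      have h : Integrable gfun (gaussianReal 0 1) := (integrable_gauss_iff gfun).mpr integrable_phig
      rw [← hlaw] at h
      exact (integrable_map_measure haesm hmeas.aemeasurable).mp h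
    have hInt2 : Integrable (fun ω => gfun (W ω) ^ 2) P := by
      have h : Integrable (fun x => gfun x ^ 2) (gaussianReal 0 1) :=
        (integrable_gauss_iff _).mpr integrable_phigsq
      rw [← hlaw] at h
      exact (integrable_map_measure haesm2 hmeas.aemeasurable).mp h
    have hmem : MeasureTheory.MemLp (fun ω => gfun (W ω)) 2 P :=
      (memLp_two_iff_integrable_sq
        (measurable_gfun.comp hmeas).aestronglyMeasurable).mpr hInt2
    have hE1 : ∫ ω, gfun (W ω) ∂P = Real.sqrt (2 * Real.pi) := by
      rw [← integral_map hmeas.aemeasurable haesm, hlaw, integral_gauss, int_phig]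
    have hE2 : ∫ ω, gfun (W ω) ^ 2 ∂P = 4 * Real.pi - 4 := by
      rw [← integral_map hmeas.aemeasurable haesm2, hlaw, integral_gauss, int_phigsq]
    rw [hθ, variance_eq_sub hmem]
    have hsq : ((fun ω => gfun (W ω)) ^ 2) = fun ω => gfun (W ω) ^ 2 := by
      funext ω; simp [pow_two]
    rw [show P[(fun ω => gfun (W ω)) ^ 2] = ∫ ω, gfun (W ω) ^ 2 ∂P by rw [hsq],
      hE1, hE2, Real.sq_sqrt (by positivity : (0:ℝ) ≤ 2 * Real.pi)]
    ring
end
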